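/- arXiv:1210.4798 — 3 statements merged into one kernel-verified Lean document; each statement's English description precedes it below -/
import Mathlib

section
/- In the α-HoC model, the second moment of the number X of accessible paths satisfies E[X^2] ≤ sum_{k=1}^{n} n! * T(n,k) * C(2n-2k, n-k) * (1-α)^{2n-k-1} / (2n-k-1)!. -/
open MeasureTheory
open scoped Classical ENNReal

noncomputable section

/-- The vertex reached after `t` steps along the monotone path in the directed `n`-hypercube
encoded by the permutation `π` (coordinate `π s` is flipped from `0` to `1` at step `s+1`). -/
def pathVertex (n : ℕ) (π : Equiv.Perm (Fin n)) (t : ℕ) : Fin n → Bool :=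
  fun i => decide ((π.symm i : ℕ) < t)

/-- Product measure on fitness assignments: each vertex of the hypercube independently
receives a Uniform(0,1) value. -/
def hocMeasure (n : ℕ) : Measure ((Fin n → Bool) → ℝ) :=
  Measure.pi fun _ => volume.restrict (Set.Icc (0 : ℝ) 1)

/-- Fitness function with prescribed values `a` at the all-zeroes vertex and `c` at the
all-ones vertex, and the random value `ω v` elsewhere. -/
def fitness (n : ℕ) (a c : ℝ) (ω : (Fin n → Bool) → ℝ) (v : Fin n → Bool) : ℝ :=
  if v = (fun _ => false) then a else if v = (fun _ => true) then c else ω v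

/-- The monotone path `π` is accessible: fitness strictly increases along it. -/
def accessible (n : ℕ) (a c : ℝ) (ω : (Fin n → Bool) → ℝ) (π : Equiv.Perm (Fin n)) : Prop :=
  ∀ t < n, fitness n a c ω (pathVertex n π t) < fitness n a c ω (pathVertex n π (t + 1))

/-- The number of accessible monotone paths from all-zeroes to all-ones. -/
def numAccessible (n : ℕ) (a c : ℝ) (ω : (Fin n → Bool) → ℝ) : ℕ :=
  (Finset.univ.filter fun π : Equiv.Perm (Fin n) => accessible n a c ω π).card
/-- The number of components of a permutation of `{1,…,n}`. -/
def numComponents {n : ℕ} (π : Equiv.Perm (Fin n)) : ℕ :=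
  ((Finset.Icc 1 n).filter fun s => ∀ i : Fin n, (i : ℕ) < s → (π i : ℕ) < s).card

/-- `T n k`: number of permutations of `{1,…,n}` with exactly `k` components. -/
def T (n k : ℕ) : ℕ :=
  (Finset.univ.filter fun π : Equiv.Perm (Fin n) => numComponents π = k).card

section Basics
variable {n : ℕ}

lemma card_filter_coe_lt (t : ℕ) (ht : t ≤ n) :
    (Finset.univ.filter fun i : Fin n => (i : ℕ) < t).card = t := by
  have h2 : (Finset.univ.filter fun i : Fin n => (i : ℕ) < t).card = (Finset.range t).card := by
    refine Finset.card_bij (fun i _ => (i : ℕ)) ?_ ?_ ?_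
    · intro a ha; simp only [Finset.mem_filter] at ha; simp [ha.2]
    · intro a _ b _ h; exact Fin.ext h
    · intro b hb; simp only [Finset.mem_range] at hb
      exact ⟨⟨b, by omega⟩, by simp [hb], rfl⟩
  rw [h2, Finset.card_range]

lemma pathVertex_card (π : Equiv.Perm (Fin n)) (t : ℕ) (ht : t ≤ n) :
    (Finset.univ.filter fun i => pathVertex n π t i = true).card = t := by
  have h2 : (Finset.univ.filter fun i => pathVertex n π t i = true).card
      = (Finset.univ.filter fun i : Fin n => (i : ℕ) < t).card := by
    refine Finset.card_bij (fun i _ => π.symm i) ?_ ?_ ?_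
    · intro a ha; simp only [Finset.mem_filter, pathVertex, decide_eq_true_eq] at ha
      simp [ha.2]
    · intro a _ b _ h; exact π.symm.injective h
    · intro b hb; simp only [Finset.mem_filter] at hb
      exact ⟨π b, by simp [pathVertex, hb.2], by simp⟩
  rw [h2, card_filter_coe_lt t ht]

lemma pathVertex_inj {π σ : Equiv.Perm (Fin n)} {t s : ℕ} (ht : t ≤ n) (hs : s ≤ n)
    (h : pathVertex n π t = pathVertex n σ s) : t = s := by
  have h1 := pathVertex_card π t ht
  rw [h, pathVertex_card σ s hs] at h1; omega

lemma pathVertex_zero (π : Equiv.Perm (Fin n)) : pathVertex n π 0 = fun _ => false := by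
  funext i; simp [pathVertex]

lemma pathVertex_n (π : Equiv.Perm (Fin n)) : pathVertex n π n = fun _ => true := by
  funext i; simp [pathVertex, (π.symm i).isLt]

lemma pathVertex_ne_bot (π : Equiv.Perm (Fin n)) {t : ℕ} (ht1 : 1 ≤ t) (ht2 : t ≤ n) :
    pathVertex n π t ≠ fun _ => false := by
  intro h
  have := pathVertex_inj ht2 (Nat.zero_le n) (h.trans (pathVertex_zero π).symm)
  omega

lemma pathVertex_ne_top (π : Equiv.Perm (Fin n)) {t : ℕ} (ht2 : t < n) :
    pathVertex n π t ≠ fun _ => true := by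
  intro h
  have := pathVertex_inj (le_of_lt ht2) le_rfl (h.trans (pathVertex_n π).symm)
  omega

lemma fitness_interior {a c : ℝ} {ω : (Fin n → Bool) → ℝ} (π : Equiv.Perm (Fin n)) {t : ℕ}
    (ht1 : 1 ≤ t) (ht2 : t < n) :
    fitness n a c ω (pathVertex n π t) = ω (pathVertex n π t) := by
  rw [fitness, if_neg (pathVertex_ne_bot π ht1 (le_of_lt ht2)), if_neg (pathVertex_ne_top π ht2)]

lemma accessible_mono {a c : ℝ} {ω : (Fin n → Bool) → ℝ} {π : Equiv.Perm (Fin n)}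
    (h : accessible n a c ω π) :
    ∀ s t, t < s → s ≤ n →
      fitness n a c ω (pathVertex n π t) < fitness n a c ω (pathVertex n π s) := by
  intro s
  induction s with
  | zero => intro t ht _; omega
  | succ m ih =>
    intro t ht hm
    rcases Nat.lt_or_ge t m with h' | h'
    · exact (ih t h' (by omega)).trans (h m (by omega))
    · have : t = m := by omega
      subst this; exact h t (by omega)

lemma accessible_interior_mem {a c : ℝ} {ω : (Fin n → Bool) → ℝ} {π : Equiv.Perm (Fin n)}
    (h : accessible n a c ω π) (hn : 1 ≤ n) {t : ℕ} (ht1 : 1 ≤ t) (ht2 : t < n) :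
    ω (pathVertex n π t) ∈ Set.Ioo a c := by
  have h1 := accessible_mono h t 0 ht1 (le_of_lt ht2)
  have h2 := accessible_mono h n t ht2 le_rfl
  rw [fitness_interior π ht1 ht2] at h1 h2
  rw [pathVertex_zero] at h1
  rw [pathVertex_n] at h2
  have e1 : fitness n a c ω (fun _ => false) = a := by rw [fitness, if_pos rfl]
  have e2 : fitness n a c ω (fun _ => true) = c := by
    rw [fitness, if_neg, if_pos rfl]
    intro hc
    have : (false : Bool) = true := by
      have := congrFun hc ⟨0, by omega⟩; simpa using this.symm
    simp at this
  rw [e1] at h1; rw [e2] at h2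
  exact ⟨h1, h2⟩

lemma accessible_interior_lt {a c : ℝ} {ω : (Fin n → Bool) → ℝ} {π : Equiv.Perm (Fin n)}
    (h : accessible n a c ω π) {t s : ℕ} (ht1 : 1 ≤ t) (hts : t < s) (hs : s < n) :
    ω (pathVertex n π t) < ω (pathVertex n π s) := by
  have := accessible_mono h s t hts (le_of_lt hs)
  rwa [fitness_interior π ht1 (by omega), fitness_interior π (by omega) hs] at this

end Basics

instance : IsProbabilityMeasure (volume.restrict (Set.Icc (0:ℝ) 1)) :=
  ⟨by simp [Real.volume_Icc]⟩

instance (n : ℕ) : IsProbabilityMeasure (hocMeasure n) := by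
  unfold hocMeasure; infer_instance

lemma mu0_Ioo {α : ℝ} (hα0 : 0 ≤ α) :
    (volume.restrict (Set.Icc (0:ℝ) 1)) (Set.Ioo α 1) = ENNReal.ofReal (1 - α) := by
  rw [Measure.restrict_apply measurableSet_Ioo]
  have : Set.Ioo α 1 ∩ Set.Icc (0:ℝ) 1 = Set.Ioo α 1 := by
    apply Set.inter_eq_self_of_subset_left
    intro x hx; exact ⟨le_of_lt (lt_of_le_of_lt hα0 hx.1), le_of_lt hx.2⟩
  rw [this, Real.volume_Ioo]

lemma cylinder_measure (n : ℕ) {α : ℝ} (hα0 : 0 ≤ α) (s : Finset (Fin n → Bool)) :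
    hocMeasure n {ω | ∀ v ∈ s, ω v ∈ Set.Ioo α 1} = ENNReal.ofReal (1 - α) ^ s.card := by
  have hset : {ω : (Fin n → Bool) → ℝ | ∀ v ∈ s, ω v ∈ Set.Ioo α 1}
      = Set.pi Set.univ (fun v => if v ∈ s then Set.Ioo α 1 else Set.univ) := by
    ext ω; simp only [Set.mem_setOf_eq, Set.mem_pi, Set.mem_univ, forall_true_left]
    constructor
    · intro h v; by_cases hv : v ∈ s <;> simp [hv, h v]
    · intro h v hv; have := h v; rwa [if_pos hv] at this
  rw [hset, hocMeasure, Measure.pi_pi]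
  have : ∀ v : Fin n → Bool,
      (volume.restrict (Set.Icc (0:ℝ) 1)) (if v ∈ s then Set.Ioo α 1 else Set.univ)
      = if v ∈ s then ENNReal.ofReal (1 - α) else 1 := by
    intro v; by_cases hv : v ∈ s
    · rw [if_pos hv, if_pos hv, mu0_Ioo hα0]
    · rw [if_neg hv, if_neg hv, measure_univ]
  simp_rw [this]
  rw [Finset.prod_ite_mem Finset.univ s (fun _ => ENNReal.ofReal (1-α)),
    Finset.univ_inter, Finset.prod_const]

lemma hoc_perm_invariant (n : ℕ) (h : Equiv.Perm (Fin n → Bool))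
    {E : Set ((Fin n → Bool) → ℝ)} (hE : MeasurableSet E) :
    hocMeasure n ((fun ω v => ω (h.symm v)) ⁻¹' E) = hocMeasure n E := by
  have hp := MeasureTheory.measurePreserving_piCongrLeft
    (fun _ : (Fin n → Bool) => volume.restrict (Set.Icc (0:ℝ) 1)) h
  have hc : ⇑(MeasurableEquiv.piCongrLeft (fun _ : (Fin n → Bool) => ℝ) h)
      = fun ω v => ω (h.symm v) := by
    funext ω v
    rw [MeasurableEquiv.coe_piCongrLeft]
    simp [Equiv.piCongrLeft_apply, eq_rec_constant]
  rw [← hc]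
  exact hp.measure_preimage hE.nullMeasurableSet

lemma tie_null (n : ℕ) {v w : Fin n → Bool} (hvw : v ≠ w) :
    hocMeasure n {ω | ω v = ω w} = 0 := by
  set p : (Fin n → Bool) → Prop := fun x => x = v with hp
  have hpres := measurePreserving_piEquivPiSubtypeProd
    (fun _ : (Fin n → Bool) => volume.restrict (Set.Icc (0:ℝ) 1)) p
  set E : Set (((i : Subtype p) → ℝ) × ((i : {i // ¬ p i}) → ℝ)) :=
    {q | q.1 ⟨v, rfl⟩ = q.2 ⟨w, fun hw => hvw hw.symm⟩} with hEdef
  have hEm : MeasurableSet E := by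
    apply measurableSet_eq_fun
    · exact (measurable_pi_apply _).comp measurable_fst
    · exact (measurable_pi_apply _).comp measurable_snd
  have hpre : (⇑(MeasurableEquiv.piEquivPiSubtypeProd (fun _ : (Fin n → Bool) => ℝ) p)) ⁻¹' E
      = {ω | ω v = ω w} := by
    ext ω; simp [E, MeasurableEquiv.piEquivPiSubtypeProd, Equiv.piEquivPiSubtypeProd]
  have := hpres.measure_preimage hEm.nullMeasurableSet
  rw [hpre] at this
  rw [hocMeasure, this, Measure.prod_apply hEm]
  have hzero : ∀ x : (i : Subtype p) → ℝ,
      (Measure.pi fun _ : {i // ¬ p i} => volume.restrict (Set.Icc (0:ℝ) 1))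
        (Prod.mk x ⁻¹' E) = 0 := by
    intro x
    have : Prod.mk x ⁻¹' E
        = (Function.eval (⟨w, fun hw => hvw hw.symm⟩ : {i // ¬ p i})) ⁻¹'
            ({x ⟨v, rfl⟩} : Set ℝ) := by
      ext y; simp [E, eq_comm, Function.eval]
    rw [this]
    apply Measure.pi_eval_preimage_null
    rw [Measure.restrict_apply (measurableSet_singleton _)]
    exact measure_mono_null Set.inter_subset_left (measure_singleton _)
  simp only [hzero]
  simp

section Simplex
variable {n m : ℕ} {α : ℝ}

def SEvent (n : ℕ) (α : ℝ) {m : ℕ} (g : Fin m → (Fin n → Bool)) (τ : Equiv.Perm (Fin m)) :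
    Set ((Fin n → Bool) → ℝ) :=
  {ω | StrictMono (fun i => ω (g (τ i))) ∧ ∀ i, ω (g i) ∈ Set.Ioo α 1}

lemma SEvent_measurable (g : Fin m → (Fin n → Bool)) (τ : Equiv.Perm (Fin m)) :
    MeasurableSet (SEvent n α g τ) := by
  have h1 : SEvent n α g τ =
      (⋂ i, ⋂ j, ⋂ (_ : i < j), {ω : (Fin n → Bool) → ℝ | ω (g (τ i)) < ω (g (τ j))}) ∩
      (⋂ i, {ω : (Fin n → Bool) → ℝ | ω (g i) ∈ Set.Ioo α 1}) := by
    ext ω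
    simp only [SEvent, Set.mem_setOf_eq, Set.mem_inter_iff, Set.mem_iInter, StrictMono]
    try tauto
  rw [h1]
  apply MeasurableSet.inter
  · exact MeasurableSet.iInter fun i => MeasurableSet.iInter fun j =>
      MeasurableSet.iInter fun _ =>
        measurableSet_lt (measurable_pi_apply _) (measurable_pi_apply _)
  · exact MeasurableSet.iInter fun i =>
      (measurable_pi_apply _) measurableSet_Ioo

lemma SEvent_disjoint {g : Fin m → (Fin n → Bool)} (hg : Function.Injective g)
    {τ τ' : Equiv.Perm (Fin m)} (hne : τ ≠ τ') :
    Disjoint (SEvent n α g τ) (SEvent n α g τ') := by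
  rw [Set.disjoint_left]
  rintro ω ⟨h1, _⟩ ⟨h2, _⟩
  have hrange : Set.range (fun i => ω (g (τ i))) = Set.range (fun i => ω (g (τ' i))) := by
    have e1 : Set.range (fun i => ω (g (τ i))) = Set.range (fun i => ω (g i)) :=
      Function.Surjective.range_comp τ.surjective (fun i => ω (g i))
    have e2 : Set.range (fun i => ω (g (τ' i))) = Set.range (fun i => ω (g i)) :=
      Function.Surjective.range_comp τ'.surjective (fun i => ω (g i))
    rw [e1, e2]
  have heq : (fun i => ω (g (τ i))) = fun i => ω (g (τ' i)) := by
    have inst : WellFoundedLT (Fin m) := by infer_instance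
    exact (@StrictMono.range_inj (Fin m) ℝ _ _ inst _ _ h1 h2).1 hrange
  have hωg : Function.Injective (fun i => ω (g i)) := by
    have : Function.Injective ((fun i => ω (g i)) ∘ τ) := h1.injective
    intro a b hab
    have := this.comp τ.symm.injective
    simpa [Function.comp] using @this a b (by simpa [Function.comp] using hab)
  exact hne (Equiv.ext fun i => hωg (congrFun heq i))

lemma SEvent_measure_eq {g : Fin m → (Fin n → Bool)} (hg : Function.Injective g)
    (τ : Equiv.Perm (Fin m)) :
    hocMeasure n (SEvent n α g τ) = hocMeasure n (SEvent n α g 1) := by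
  set h : Equiv.Perm (Fin n → Bool) :=
    Equiv.Perm.viaFintypeEmbedding τ⁻¹ ⟨g, hg⟩ with hh
  have hsymm : ∀ i, h.symm (g i) = g (τ i) := by
    intro i
    apply h.injective
    simp only [Equiv.apply_symm_apply]
    have := Equiv.Perm.viaFintypeEmbedding_apply_image τ⁻¹ ⟨g, hg⟩ (τ i)
    simp only [Function.Embedding.coeFn_mk] at this
    rw [hh, this]; simp
  have hpre : (fun ω (v : Fin n → Bool) => ω (h.symm v)) ⁻¹' (SEvent n α g 1)
      = SEvent n α g τ := by
    ext ω
    simp only [SEvent, Set.mem_preimage, Set.mem_setOf_eq, Equiv.Perm.coe_one, id_eq]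
    constructor
    · rintro ⟨h1, h2⟩
      refine ⟨by simpa [hsymm] using h1, ?_⟩
      intro i
      have := h2 (τ.symm i)
      rwa [hsymm, Equiv.apply_symm_apply] at this
    · rintro ⟨h1, h2⟩
      refine ⟨by simpa [hsymm] using h1, ?_⟩
      intro i
      rw [hsymm]
      exact h2 (τ i)
  rw [← hpre, hoc_perm_invariant n h (SEvent_measurable g 1)]

lemma simplex_bound (hα0 : 0 ≤ α) (hα1 : α ≤ 1) {g : Fin m → (Fin n → Bool)}
    (hg : Function.Injective g) :
    hocMeasure n {ω | StrictMono (fun i => ω (g i)) ∧ ∀ i, ω (g i) ∈ Set.Ioo α 1}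
      ≤ ENNReal.ofReal ((1 - α) ^ m / m.factorial) := by
  have hS1 : {ω : (Fin n → Bool) → ℝ | StrictMono (fun i => ω (g i)) ∧
      ∀ i, ω (g i) ∈ Set.Ioo α 1} = SEvent n α g 1 := rfl
  rw [hS1]
  have hsum : ∑ τ : Equiv.Perm (Fin m), hocMeasure n (SEvent n α g τ)
      = hocMeasure n (⋃ τ ∈ (Finset.univ : Finset (Equiv.Perm (Fin m))), SEvent n α g τ) := by
    rw [measure_biUnion_finset]
    · intro τ _ τ' _ hne; exact SEvent_disjoint hg hne
    · intro τ _; exact SEvent_measurable g τ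
  have hcylsub : (⋃ τ ∈ (Finset.univ : Finset (Equiv.Perm (Fin m))), SEvent n α g τ)
      ⊆ {ω | ∀ v ∈ Finset.image g Finset.univ, ω v ∈ Set.Ioo α 1} := by
    intro ω hω
    simp only [Set.mem_iUnion] at hω
    obtain ⟨τ, _, h1, h2⟩ := hω
    intro v hv
    obtain ⟨i, _, rfl⟩ := Finset.mem_image.mp hv
    exact h2 i
  have hcyl : hocMeasure n {ω | ∀ v ∈ Finset.image g Finset.univ, ω v ∈ Set.Ioo α 1}
      = ENNReal.ofReal (1 - α) ^ m := by
    rw [cylinder_measure n hα0, Finset.card_image_of_injective _ hg, Finset.card_univ,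
      Fintype.card_fin]
  have hbound : ∑ τ : Equiv.Perm (Fin m), hocMeasure n (SEvent n α g τ)
      ≤ ENNReal.ofReal (1 - α) ^ m := by
    rw [hsum, ← hcyl]; exact measure_mono hcylsub
  have hconst : ∀ τ : Equiv.Perm (Fin m),
      hocMeasure n (SEvent n α g τ) = hocMeasure n (SEvent n α g 1) :=
    SEvent_measure_eq hg
  rw [Finset.sum_congr rfl (fun τ _ => hconst τ), Finset.sum_const, Finset.card_univ,
    Fintype.card_perm, Fintype.card_fin] at hbound
  -- hbound : m ! • hocMeasure n (SEvent n α g 1) ≤ ENNReal.ofReal (1 - α) ^ m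
  have hfact_pos : (0:ℝ) < m.factorial := by positivity
  rw [ENNReal.ofReal_div_of_pos hfact_pos, ENNReal.ofReal_pow (by linarith), 
    ENNReal.ofReal_natCast]
  rw [ENNReal.le_div_iff_mul_le (by simp [Nat.factorial_ne_zero]) (by simp)]
  calc hocMeasure n (SEvent n α g 1) * (m.factorial : ℝ≥0∞)
      = (m.factorial : ℕ) • hocMeasure n (SEvent n α g 1) := by
        rw [nsmul_eq_mul, mul_comm]
    _ ≤ ENNReal.ofReal (1 - α) ^ m := hbound

end Simplex

set_option linter.unusedSectionVars false

section Counting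
variable {V : Type*} [Fintype V] [DecidableEq V]
variable {r m : ℕ}

lemma card_filter_lt {q : ℕ} (x : Fin q) :
    (Finset.univ.filter fun y : Fin q => y < x).card = (x : ℕ) := by
  have h2 : (Finset.univ.filter fun y : Fin q => y < x).card = (Finset.range x).card := by
    refine Finset.card_bij (fun i _ => (i : ℕ)) ?_ ?_ ?_
    · intro a ha; simp only [Finset.mem_filter] at ha
      simp [Finset.mem_range, Fin.lt_def.mp ha.2]
    · intro a _ b _ h; exact Fin.ext h
    · intro b hb; simp only [Finset.mem_range] at hb
      have hbq : b < q := lt_trans hb x.isLt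
      refine ⟨⟨b, hbq⟩, Finset.mem_filter.mpr ⟨Finset.mem_univ _, ?_⟩, rfl⟩
      simp only [Fin.lt_def]
      simpa using hb
  rw [h2, Finset.card_range]

/-- The shared indices of two chains. -/
def sharedD (c d : Fin r → V) : Finset (Fin r) := Finset.univ.filter fun j => c j = d j

/-- Positions forced for shared elements. -/
def Rfun (c d : Fin r → V) (j : Fin r) : ℕ :=
  2 * (j : ℕ) - ((sharedD c d).filter (fun x => x < j)).card

/-- `g : Fin m → V` is a linear extension of the two chains `c`, `d`. -/
def ExtP (c d : Fin r → V) {m : ℕ} (g : Fin m → V) : Prop :=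
  Function.Injective g ∧
  (∀ i, (∃ j, g i = c j) ∨ (∃ j, g i = d j)) ∧
  (∀ j, ∃ i, g i = c j) ∧ (∀ j, ∃ i, g i = d j) ∧
  (∀ ⦃j j' : Fin r⦄ ⦃i i' : Fin m⦄, g i = c j → g i' = c j' → (j < j' ↔ i < i')) ∧
  (∀ ⦃j j' : Fin r⦄ ⦃i i' : Fin m⦄, g i = d j → g i' = d j' → (j < j' ↔ i < i'))

variable {c d : Fin r → V}

lemma forced_rank (hcd : ∀ j j', c j = d j' → j = j') {g : Fin m → V} (hg : ExtP c d g)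
    {j : Fin r} (hj : c j = d j) {i : Fin m} (hi : g i = c j) :
    (i : ℕ) = Rfun c d j := by
  obtain ⟨hinj, hrange, hac, had, hcc, hdd⟩ := hg
  choose a ha using hac
  choose b hb using had
  have hstrict : StrictMono a := fun x y hxy => (hcc (ha x) (ha y)).mp hxy
  have hainj : Function.Injective a := hstrict.injective
  have hba : b j = a j := hinj (by rw [ha, hb, hj])
  have hL : (Finset.univ.filter fun i' : Fin m => i' < i)
      = (Finset.univ.filter fun j' : Fin r => j' < j).image a
        ∪ (Finset.univ.filter fun j' : Fin r => j' < j).image b := by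
    ext i'
    simp only [Finset.mem_filter, Finset.mem_union, Finset.mem_image, Finset.mem_univ,
      true_and]
    constructor
    · intro hi'
      rcases hrange i' with ⟨j', hj'⟩ | ⟨j', hj'⟩
      · have : i' = a j' := hinj (by rw [hj', ha])
        subst this
        exact Or.inl ⟨j', (hcc (ha j') hi).mpr hi', rfl⟩
      · have : i' = b j' := hinj (by rw [hj', hb])
        subst this
        have hdj : g i = d j := by rw [hi, hj]
        exact Or.inr ⟨j', (hdd (hb j') hdj).mpr hi', rfl⟩
    · rintro (⟨j', hj', rfl⟩ | ⟨j', hj', rfl⟩)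
      · exact (hcc (ha j') hi).mp hj'
      · have hdj : g i = d j := by rw [hi, hj]
        exact (hdd (hb j') hdj).mp hj'
  have hInter : ((Finset.univ.filter fun j' : Fin r => j' < j).image a)
      ∩ ((Finset.univ.filter fun j' : Fin r => j' < j).image b)
      = ((sharedD c d).filter (fun x => x < j)).image a := by
    ext x
    simp only [Finset.mem_inter, Finset.mem_image, Finset.mem_filter, Finset.mem_univ,
      true_and, sharedD]
    constructor
    · rintro ⟨⟨j₁, hj₁, rfl⟩, ⟨j₂, hj₂, heq⟩⟩
      have : c j₁ = d j₂ := by rw [← ha j₁, ← hb j₂, heq]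
      have hj12 := hcd _ _ this
      subst hj12
      exact ⟨j₁, ⟨this, hj₁⟩, rfl⟩
    · rintro ⟨j₁, ⟨hshare, hj₁⟩, rfl⟩
      refine ⟨⟨j₁, hj₁, rfl⟩, ⟨j₁, hj₁, ?_⟩⟩
      exact hinj (by rw [ha, hb, hshare])
  have hcard := congrArg Finset.card hL
  rw [card_filter_lt i] at hcard
  have hUI := Finset.card_union_add_card_inter
    ((Finset.univ.filter fun j' : Fin r => j' < j).image a)
    ((Finset.univ.filter fun j' : Fin r => j' < j).image b)
  rw [hInter] at hUI
  have hbstrict : StrictMono b := fun x y hxy => (hdd (hb x) (hb y)).mp hxy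
  have hbinj : Function.Injective b := hbstrict.injective
  rw [Finset.card_image_of_injective _ hainj, Finset.card_image_of_injective _ hbinj,
    Finset.card_image_of_injective _ hainj, card_filter_lt j] at hUI
  have hDle : (((sharedD c d).filter (fun x => x < j)).card) ≤ (j : ℕ) := by
    calc ((sharedD c d).filter (fun x => x < j)).card
        ≤ (Finset.univ.filter fun x : Fin r => x < j).card :=
          Finset.card_le_card (fun x hx => by
            simp only [Finset.mem_filter] at hx ⊢
            exact ⟨Finset.mem_univ x, hx.2⟩)
      _ = (j : ℕ) := card_filter_lt j
  rw [Rfun]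
  omega

end Counting

section Counting2
variable {V : Type*} [Fintype V] [DecidableEq V]
variable {r m : ℕ} {c d : Fin r → V}

def RSet (c d : Fin r → V) (m : ℕ) : Finset (Fin m) :=
  Finset.univ.filter fun i => ∃ j ∈ sharedD c d, (i : ℕ) = Rfun c d j

def PhiSet (c d : Fin r → V) {m : ℕ} (g : Fin m → V) : Finset (Fin m) :=
  Finset.univ.filter fun i => ∃ j, j ∉ sharedD c d ∧ g i = c j

def PsiSet (c d : Fin r → V) {m : ℕ} (g : Fin m → V) : Finset (Fin m) :=
  Finset.univ.filter fun i => ∃ j, j ∉ sharedD c d ∧ g i = d j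

lemma mem_sharedD {j : Fin r} : j ∈ sharedD c d ↔ c j = d j := by
  simp [sharedD]

lemma extP_card (hc : Function.Injective c)
    (hcd : ∀ j j', c j = d j' → j = j') (m : ℕ) :
    ((Finset.univ : Finset (Fin m → V)).filter fun g => ExtP c d g).card
      ≤ Nat.choose (m - (sharedD c d).card) (r - (sharedD c d).card) := by
  classical
  set D := sharedD c d with hD
  set dd := D.card with hdd
  by_cases hne : ((Finset.univ : Finset (Fin m → V)).filter fun g => ExtP c d g).Nonempty
  swap
  · rw [Finset.not_nonempty_iff_eq_empty] at hne; rw [hne]; simp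
  -- facts about any g in the filter
  have key : ∀ g : Fin m → V, ExtP c d g → ∃ a b : Fin r → Fin m,
      (∀ j, g (a j) = c j) ∧ (∀ j, g (b j) = d j) ∧ StrictMono a ∧ StrictMono b ∧
      (∀ j ∈ D, (a j : ℕ) = Rfun c d j) ∧ (∀ j ∈ D, (b j : ℕ) = Rfun c d j) := by
    intro g hg
    obtain ⟨hinj, hrange, hac, had, hcc, hdd'⟩ := hg
    choose a ha using hac
    choose b hb using had
    refine ⟨a, b, ha, hb, fun x y hxy => (hcc (ha x) (ha y)).mp hxy,
      fun x y hxy => (hdd' (hb x) (hb y)).mp hxy, ?_, ?_⟩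
    · intro j hj
      exact forced_rank hcd ⟨hinj, hrange, fun j => ⟨a j, ha j⟩, fun j => ⟨b j, hb j⟩,
        hcc, hdd'⟩ (mem_sharedD.mp hj) (ha j)
    · intro j hj
      have hcj : c j = d j := mem_sharedD.mp hj
      exact forced_rank hcd ⟨hinj, hrange, fun j => ⟨a j, ha j⟩, fun j => ⟨b j, hb j⟩,
        hcc, hdd'⟩ hcj (by rw [hb, hcj])
  -- RSet membership characterization for extensions
  have hRmem : ∀ g : Fin m → V, ExtP c d g → ∀ i : Fin m,
      (i ∈ RSet c d m ↔ ∃ j ∈ D, g i = c j) := by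
    intro g hg i
    obtain ⟨a, b, ha, hb, hsa, hsb, hfa, hfb⟩ := key g hg
    simp only [RSet, Finset.mem_filter, Finset.mem_univ, true_and]
    constructor
    · rintro ⟨j, hj, hij⟩
      have : i = a j := Fin.ext (by rw [hij, ← hfa j hj])
      exact ⟨j, hj, by rw [this, ha]⟩
    · rintro ⟨j, hj, hij⟩
      have : i = a j := hg.1 (by rw [hij, ha])
      exact ⟨j, hj, by rw [this, hfa j hj]⟩
  have hRcard : (RSet c d m).card = dd := by
    obtain ⟨g₀, hg₀mem⟩ := hne
    have hg₀ : ExtP c d g₀ := (Finset.mem_filter.mp hg₀mem).2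
    obtain ⟨a, b, ha, hb, hsa, hsb, hfa, hfb⟩ := key g₀ hg₀
    have : RSet c d m = D.image a := by
      ext i
      rw [hRmem g₀ hg₀ i]
      simp only [Finset.mem_image]
      constructor
      · rintro ⟨j, hj, hij⟩
        exact ⟨j, hj, (hg₀.1 (by rw [hij, ha])).symm⟩
      · rintro ⟨j, hj, rfl⟩
        exact ⟨j, hj, ha j⟩
    rw [this, Finset.card_image_of_injective _ hsa.injective]
  have hcard_e : ((Finset.univ : Finset (Fin r)) \ D).card = r - dd := by
    rw [Finset.card_sdiff_of_subset (Finset.subset_univ D), Finset.card_univ, Fintype.card_fin, hdd]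
  -- Phi characterization
  have hPhiIm : ∀ g : Fin m → V, ExtP c d g → ∀ (a : Fin r → Fin m), (∀ j, g (a j) = c j) →
      PhiSet c d g = ((Finset.univ : Finset (Fin r)) \ D).image a := by
    intro g hg a ha
    ext i
    simp only [PhiSet, Finset.mem_filter, Finset.mem_univ, true_and, Finset.mem_image,
      Finset.mem_sdiff]
    constructor
    · rintro ⟨j, hj, hij⟩
      exact ⟨j, hj, (hg.1 (by rw [hij, ha])).symm⟩
    · rintro ⟨j, hj, rfl⟩
      exact ⟨j, hj, ha j⟩
  have hPhiCard : ∀ g : Fin m → V, ExtP c d g → (PhiSet c d g).card = r - dd := by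
    intro g hg
    obtain ⟨a, b, ha, hb, hsa, hsb, hfa, hfb⟩ := key g hg
    rw [hPhiIm g hg a ha, Finset.card_image_of_injective _ hsa.injective, hcard_e]
  -- Psi characterization
  have hPsiIm : ∀ g : Fin m → V, ExtP c d g → ∀ (b : Fin r → Fin m), (∀ j, g (b j) = d j) →
      PsiSet c d g = ((Finset.univ : Finset (Fin r)) \ D).image b := by
    intro g hg b hb
    ext i
    simp only [PsiSet, Finset.mem_filter, Finset.mem_univ, true_and, Finset.mem_image,
      Finset.mem_sdiff]
    constructor
    · rintro ⟨j, hj, hij⟩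
      exact ⟨j, hj, (hg.1 (by rw [hij, hb])).symm⟩
    · rintro ⟨j, hj, rfl⟩
      exact ⟨j, hj, hb j⟩
  -- Psi is determined by Phi
  have hPsiEq : ∀ g : Fin m → V, ExtP c d g →
      PsiSet c d g = (Finset.univ \ (PhiSet c d g ∪ RSet c d m)) := by
    intro g hg
    ext i
    simp only [Finset.mem_sdiff, Finset.mem_univ, true_and, Finset.mem_union]
    constructor
    · intro hi
      obtain ⟨j, hj, hij⟩ := (Finset.mem_filter.mp hi).2
      push_neg
      constructor
      · intro hiPhi
        obtain ⟨j', hj', hij'⟩ := (Finset.mem_filter.mp hiPhi).2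
        have : j' = j := hcd j' j (by rw [← hij', hij])
        subst this
        exact hj' (mem_sharedD.mpr (by rw [← hij', hij]))
      · intro hiR
        obtain ⟨j', hj', hij'⟩ := (hRmem g hg i).mp hiR
        have : j' = j := hcd j' j (by rw [← hij', hij])
        subst this
        exact hj hj'
    · intro hn
      push_neg at hn
      obtain ⟨hnPhi, hnR⟩ := hn
      simp only [PsiSet, Finset.mem_filter, Finset.mem_univ, true_and]
      rcases hg.2.1 i with ⟨j, hij⟩ | ⟨j, hij⟩
      · by_cases hj : j ∈ D
        · exact absurd ((hRmem g hg i).mpr ⟨j, hj, hij⟩) hnR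
        · exact absurd (Finset.mem_filter.mpr ⟨Finset.mem_univ i, ⟨j, hj, hij⟩⟩) hnPhi
      · by_cases hj : j ∈ D
        · have : g i = c j := by rw [hij, ← mem_sharedD.mp hj]
          exact absurd ((hRmem g hg i).mpr ⟨j, hj, this⟩) hnR
        · exact ⟨j, hj, hij⟩
  have hPsiCard : ∀ g : Fin m → V, ExtP c d g → (PsiSet c d g).card = r - dd := by
    intro g hg
    obtain ⟨a, b, ha, hb, hsa, hsb, hfa, hfb⟩ := key g hg
    rw [hPsiIm g hg b hb, Finset.card_image_of_injective _ hsb.injective, hcard_e]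
  -- the injection
  refine le_trans (Finset.card_le_card_of_injOn (fun g => PhiSet c d g)
    (t := Finset.powersetCard (r - dd) (Finset.univ \ RSet c d m)) ?_ ?_) ?_
  · -- maps to
    intro g hgmem
    have hg : ExtP c d g := (Finset.mem_filter.mp hgmem).2
    rw [Finset.mem_coe, Finset.mem_powersetCard]
    refine ⟨?_, hPhiCard g hg⟩
    intro i hi
    rw [Finset.mem_sdiff]
    refine ⟨Finset.mem_univ i, ?_⟩
    intro hiR
    obtain ⟨j, hj, hij⟩ := (Finset.mem_filter.mp hi).2
    obtain ⟨j', hj', hij'⟩ := (hRmem g hg i).mp hiR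
    have : j = j' := hc (by rw [← hij, hij'])
    subst this
    exact hj hj'
  · -- injectivity
    intro g hgmem g' hg'mem hPhi
    replace hPhi : PhiSet c d g = PhiSet c d g' := hPhi
    simp only [Finset.coe_filter, Set.mem_setOf_eq] at hgmem hg'mem
    have hg : ExtP c d g := hgmem.2
    have hg' : ExtP c d g' := hg'mem.2
    obtain ⟨a, b, ha, hb, hsa, hsb, hfa, hfb⟩ := key g hg
    obtain ⟨a', b', ha', hb', hsa', hsb', hfa', hfb'⟩ := key g' hg'
    set e := ((Finset.univ : Finset (Fin r)) \ D).orderEmbOfFin hcard_e with he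
    have hmeme : ∀ x, e x ∈ (Finset.univ : Finset (Fin r)) \ D :=
      fun x => Finset.orderEmbOfFin_mem _ hcard_e x
    -- a = a'
    have haa : a = a' := by
      funext j
      by_cases hj : j ∈ D
      · exact Fin.ext (by rw [hfa j hj, hfa' j hj])
      · have hA : (fun x => a (e x)) = (PhiSet c d g).orderEmbOfFin (hPhiCard g hg) := by
          apply Finset.orderEmbOfFin_unique
          · intro x
            rw [hPhiIm g hg a ha]
            exact Finset.mem_image_of_mem a (hmeme x)
          · exact hsa.comp (Finset.orderEmbOfFin _ hcard_e).strictMono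
        have hPhi2 : PhiSet c d g' = PhiSet c d g := hPhi.symm
        have hA' : (fun x => a' (e x)) = (PhiSet c d g).orderEmbOfFin (hPhiCard g hg) := by
          apply Finset.orderEmbOfFin_unique
          · intro x
            rw [← hPhi2, hPhiIm g' hg' a' ha']
            exact Finset.mem_image_of_mem a' (hmeme x)
          · exact hsa'.comp (Finset.orderEmbOfFin _ hcard_e).strictMono
        have hje : j ∈ ((Finset.univ : Finset (Fin r)) \ D) :=
          Finset.mem_sdiff.mpr ⟨Finset.mem_univ j, hj⟩
        have : j ∈ Set.range e := by rw [Finset.range_orderEmbOfFin]; exact hje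
        obtain ⟨x, rfl⟩ := this
        have h1 := congrFun hA x
        have h2 := congrFun hA' x
        rw [h1, h2]
    -- b = b'
    have hPsi : PsiSet c d g = PsiSet c d g' := by
      rw [hPsiEq g hg, hPsiEq g' hg', hPhi]
    have hbb : b = b' := by
      funext j
      by_cases hj : j ∈ D
      · exact Fin.ext (by rw [hfb j hj, hfb' j hj])
      · have hB : (fun x => b (e x)) = (PsiSet c d g).orderEmbOfFin (hPsiCard g hg) := by
          apply Finset.orderEmbOfFin_unique
          · intro x
            rw [hPsiIm g hg b hb]
            exact Finset.mem_image_of_mem b (hmeme x)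
          · exact hsb.comp (Finset.orderEmbOfFin _ hcard_e).strictMono
        have hB' : (fun x => b' (e x)) = (PsiSet c d g).orderEmbOfFin (hPsiCard g hg) := by
          apply Finset.orderEmbOfFin_unique
          · intro x
            rw [hPsi, hPsiIm g' hg' b' hb']
            exact Finset.mem_image_of_mem b' (hmeme x)
          · exact hsb'.comp (Finset.orderEmbOfFin _ hcard_e).strictMono
        have hje : j ∈ ((Finset.univ : Finset (Fin r)) \ D) :=
          Finset.mem_sdiff.mpr ⟨Finset.mem_univ j, hj⟩
        have : j ∈ Set.range e := by rw [Finset.range_orderEmbOfFin]; exact hje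
        obtain ⟨x, rfl⟩ := this
        have h1 := congrFun hB x
        have h2 := congrFun hB' x
        rw [h1, h2]
    -- conclude g = g'
    funext i
    rcases hg.2.1 i with ⟨j, hij⟩ | ⟨j, hij⟩
    · have : i = a j := hg.1 (by rw [hij, ha])
      rw [hij, this, haa, ha']
    · have : i = b j := hg.1 (by rw [hij, hb])
      rw [hij, this, hbb, hb']
  · rw [Finset.card_powersetCard, Finset.card_sdiff_of_subset (Finset.subset_univ _),
      Finset.card_univ, Fintype.card_fin, hRcard]

end Counting2

lemma pathVertex_card' {n : ℕ} (π : Equiv.Perm (Fin n)) (t : ℕ) (ht : t ≤ n) :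
    (Finset.univ.filter fun i : Fin n => (π.symm i : ℕ) < t).card = t := by
  have h2 : (Finset.univ.filter fun i : Fin n => (π.symm i : ℕ) < t).card
      = (Finset.univ.filter fun i : Fin n => (i : ℕ) < t).card := by
    refine Finset.card_bij (fun i _ => π.symm i) ?_ ?_ ?_
    · intro a ha; simp only [Finset.mem_filter] at ha
      simp [ha.2]
    · intro a _ b _ h; exact π.symm.injective h
    · intro b hb; simp only [Finset.mem_filter] at hb
      exact ⟨π b, by simp [hb.2], by simp⟩
  rw [h2, card_filter_coe_lt t ht]

lemma pv_eq_iff {n : ℕ} (π σ : Equiv.Perm (Fin n)) (t : ℕ) (ht : t ≤ n) :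
    pathVertex n π t = pathVertex n σ t
      ↔ (∀ i : Fin n, (i : ℕ) < t → (((π⁻¹ * σ) i : Fin n) : ℕ) < t) := by
  have happ : ∀ i : Fin n, ((π⁻¹ * σ) i : Fin n) = π.symm (σ i) := by
    intro i; rfl
  constructor
  · intro h i hi
    have := congrFun h (σ i)
    simp only [pathVertex, decide_eq_decide] at this
    rw [happ]
    apply this.mpr
    simpa using hi
  · intro h
    funext i
    simp only [pathVertex, decide_eq_decide]
    have hback : ∀ b : Fin n, (σ.symm b : ℕ) < t → (π.symm b : ℕ) < t := by
      intro b hb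
      have := h (σ.symm b) hb
      rw [happ] at this
      simpa using this
    have hsets : (Finset.univ.filter fun b : Fin n => (σ.symm b : ℕ) < t)
        = (Finset.univ.filter fun b : Fin n => (π.symm b : ℕ) < t) := by
      apply Finset.eq_of_subset_of_card_le
      · intro b hb
        simp only [Finset.mem_filter, Finset.mem_univ, true_and] at hb ⊢
        exact hback b hb
      · rw [pathVertex_card' π t ht, pathVertex_card' σ t ht]
    constructor
    · intro hπ
      have : i ∈ (Finset.univ.filter fun b : Fin n => (π.symm b : ℕ) < t) := by
        simp [hπ]
      rw [← hsets] at this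
      simpa using this
    · exact hback i

def chain (n : ℕ) (π : Equiv.Perm (Fin n)) : Fin (n-1) → (Fin n → Bool) :=
  fun j => pathVertex n π ((j : ℕ) + 1)

def sharedD' {n : ℕ} (π σ : Equiv.Perm (Fin n)) : Finset (Fin (n-1)) :=
  sharedD (chain n π) (chain n σ)

lemma numComponents_eq {n : ℕ} (hn : 1 ≤ n) (π σ : Equiv.Perm (Fin n)) :
    numComponents (π⁻¹ * σ) = (sharedD' π σ).card + 1 := by
  set ρ := π⁻¹ * σ with hρ
  set P : ℕ → Prop := fun s => ∀ i : Fin n, (i : ℕ) < s → ((ρ i : Fin n) : ℕ) < s with hP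
  have hPn : P n := fun i _ => (ρ i).isLt
  have hicc : Finset.Icc 1 n = insert n (Finset.Icc 1 (n-1)) := by
    ext s
    simp only [Finset.mem_Icc, Finset.mem_insert]
    omega
  have hnotmem : n ∉ Finset.Icc 1 (n-1) := by simp; omega
  rw [numComponents, hicc, Finset.filter_insert, if_pos hPn,
    Finset.card_insert_of_notMem (fun h => hnotmem (Finset.mem_of_mem_filter n h))]
  congr 1
  -- card of (Icc 1 (n-1)).filter P = card sharedD'
  refine Finset.card_bij' (fun s hs => (⟨s - 1, by
      simp only [Finset.mem_filter, Finset.mem_Icc] at hs; omega⟩ : Fin (n-1)))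
    (fun j _ => (j : ℕ) + 1) ?_ ?_ ?_ ?_
  · intro s hs
    simp only [Finset.mem_filter, Finset.mem_Icc] at hs
    obtain ⟨⟨hs1, hs2⟩, hPs⟩ := hs
    simp only [sharedD', sharedD, Finset.mem_filter, Finset.mem_univ, true_and]
    simp only [chain]
    have : s - 1 + 1 = s := by omega
    rw [this]
    exact (pv_eq_iff π σ s (by omega)).mpr hPs
  · intro j hj
    simp only [sharedD', sharedD, Finset.mem_filter, Finset.mem_univ, true_and] at hj
    simp only [chain] at hj
    simp only [Finset.mem_filter, Finset.mem_Icc]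
    have hjlt : (j : ℕ) < n - 1 := j.isLt
    refine ⟨⟨by omega, by omega⟩, ?_⟩
    exact (pv_eq_iff π σ ((j : ℕ) + 1) (by omega)).mp hj
  · intro s hs
    simp only [Finset.mem_filter, Finset.mem_Icc] at hs
    show s - 1 + 1 = s
    omega
  · intro j hj
    exact Fin.ext (by simp)


section Pair
variable {n : ℕ}

lemma chain_injective (π : Equiv.Perm (Fin n)) : Function.Injective (chain n π) := by
  intro j j' h
  have h1 := pathVertex_inj (π := π) (σ := π)
    (t := (j : ℕ) + 1) (s := (j' : ℕ) + 1) (by have := j.isLt; omega)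
    (by have := j'.isLt; omega) h
  exact Fin.ext (by omega)

lemma chain_cd (π σ : Equiv.Perm (Fin n)) :
    ∀ j j', chain n π j = chain n σ j' → j = j' := by
  intro j j' h
  have h1 := pathVertex_inj (π := π) (σ := σ)
    (t := (j : ℕ) + 1) (s := (j' : ℕ) + 1) (by have := j.isLt; omega)
    (by have := j'.isLt; omega) h
  exact Fin.ext (by omega)

lemma pair_bound (hn : 1 ≤ n) {α : ℝ} (hα0 : 0 ≤ α) (hα1 : α ≤ 1)
    (π σ : Equiv.Perm (Fin n)) :
    hocMeasure n {ω | accessible n α 1 ω π ∧ accessible n α 1 ω σ}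
      ≤ ENNReal.ofReal
          ((Nat.choose (2*n - 2*numComponents (π⁻¹*σ)) (n - numComponents (π⁻¹*σ)) : ℝ)
            * ((1-α)^(2*n - numComponents (π⁻¹*σ) - 1)
              / (Nat.factorial (2*n - numComponents (π⁻¹*σ) - 1)))) := by
  classical
  set r := n - 1 with hr
  set c := chain n π with hcdef
  set d := chain n σ with hddef
  have hc : Function.Injective c := chain_injective π
  have hd : Function.Injective d := chain_injective σ
  have hcd : ∀ j j', c j = d j' → j = j' := chain_cd π σ
  set D := sharedD c d with hD
  set dd := D.card with hdddef
  set m := 2 * r - dd with hm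
  have hdd_le : dd ≤ r := by
    calc dd ≤ (Finset.univ : Finset (Fin r)).card := Finset.card_le_card (Finset.subset_univ D)
      _ = r := by rw [Finset.card_univ, Fintype.card_fin]
  have hk : numComponents (π⁻¹ * σ) = dd + 1 := by
    rw [numComponents_eq hn π σ]
    rfl
  -- the union of interior vertices
  set U : Finset (Fin n → Bool) :=
    Finset.image c Finset.univ ∪ Finset.image d Finset.univ with hU
  have hUcard : U.card = m := by
    have hinter : Finset.image c Finset.univ ∩ Finset.image d Finset.univ = D.image c := by
      ext x
      simp only [Finset.mem_inter, Finset.mem_image, Finset.mem_univ, true_and]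
      constructor
      · rintro ⟨⟨j, rfl⟩, ⟨j', hj'⟩⟩
        have hjj : j = j' := hcd j j' hj'.symm
        subst hjj
        exact ⟨j, mem_sharedD.mpr hj'.symm, rfl⟩
      · rintro ⟨j, hj, rfl⟩
        exact ⟨⟨j, rfl⟩, ⟨j, (mem_sharedD.mp hj).symm⟩⟩
    have hui := Finset.card_union_add_card_inter
      (Finset.image c Finset.univ) (Finset.image d Finset.univ)
    rw [hinter, Finset.card_image_of_injective _ hc, Finset.card_image_of_injective _ hd,
      Finset.card_image_of_injective _ hc, Finset.card_univ, Fintype.card_fin] at hui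
    rw [← hU] at hui
    omega
  have hmemU_cases : ∀ x ∈ U, (∃ j, x = c j) ∨ (∃ j, x = d j) := by
    intro x hx
    rcases Finset.mem_union.mp hx with hx | hx
    · obtain ⟨j, _, rfl⟩ := Finset.mem_image.mp hx; exact Or.inl ⟨j, rfl⟩
    · obtain ⟨j, _, rfl⟩ := Finset.mem_image.mp hx; exact Or.inr ⟨j, rfl⟩
  -- interior values facts
  have hjbound : ∀ j : Fin r, (j : ℕ) + 1 ≤ n - 1 ∧ 1 ≤ (j : ℕ) + 1 ∧ (j : ℕ) + 1 < n := by
    intro j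
    have h1 : (j : ℕ) < n - 1 := j.isLt
    omega
  -- coverage
  have hcover : {ω : (Fin n → Bool) → ℝ | accessible n α 1 ω π ∧ accessible n α 1 ω σ}
      ⊆ (⋃ (v : Fin n → Bool) (w : Fin n → Bool) (_ : v ≠ w), {ω | ω v = ω w})
        ∪ ⋃ g ∈ Finset.univ.filter (fun g : Fin m → (Fin n → Bool) => ExtP c d g),
            SEvent n α g 1 := by
    intro ω hω
    by_cases htie : ∃ v w, v ≠ w ∧ ω v = ω w
    · left
      obtain ⟨v, w, hvw, he⟩ := htie
      exact Set.mem_iUnion.mpr ⟨v, Set.mem_iUnion.mpr ⟨w, Set.mem_iUnion.mpr ⟨hvw, he⟩⟩⟩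
    · right
      push_neg at htie
      have hωinj : Function.Injective ω := by
        intro v w h
        by_contra hne
        exact htie v w hne h
      obtain ⟨hπ, hσ⟩ := hω
      set W := U.image ω with hW
      have hWcard : W.card = m := by
        rw [hW, Finset.card_image_of_injective _ hωinj, hUcard]
      set g : Fin m → (Fin n → Bool) :=
        fun i => Function.invFunOn ω ↑U (W.orderEmbOfFin hWcard i) with hg
      have hval : ∀ i, g i ∈ U ∧ ω (g i) = W.orderEmbOfFin hWcard i := by
        intro i
        have hmem : W.orderEmbOfFin hWcard i ∈ W := Finset.orderEmbOfFin_mem W hWcard i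
        obtain ⟨u, hu, hu2⟩ := Finset.mem_image.mp hmem
        have hex : ∃ a ∈ (↑U : Set (Fin n → Bool)), ω a = W.orderEmbOfFin hWcard i :=
          ⟨u, hu, hu2⟩
        exact ⟨Function.invFunOn_mem hex, Function.invFunOn_eq hex⟩
      have hmono : StrictMono fun i => ω (g i) := by
        have he : (fun i => ω (g i)) = fun i => W.orderEmbOfFin hWcard i :=
          funext fun i => (hval i).2
        rw [he]
        exact (W.orderEmbOfFin hWcard).strictMono
      have hginj : Function.Injective g := by
        intro i i' h
        have h2 := congrArg ω h
        rw [(hval i).2, (hval i').2] at h2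
        exact (W.orderEmbOfFin hWcard).injective h2
      have hsurj : ∀ u ∈ U, ∃ i, g i = u := by
        intro u hu
        have h1 : ω u ∈ W := Finset.mem_image_of_mem ω hu
        have h2 : ω u ∈ Set.range (W.orderEmbOfFin hWcard) := by
          rw [Finset.range_orderEmbOfFin]; exact h1
        obtain ⟨i, hi⟩ := h2
        refine ⟨i, hωinj ?_⟩
        rw [(hval i).2, hi]
      have hvc : ∀ j j' : Fin r, j < j' → ω (c j) < ω (c j') := by
        intro j j' hjj
        have hb := hjbound j; have hb' := hjbound j'
        exact accessible_interior_lt hπ (by omega) (by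
          have := Fin.lt_def.mp hjj; omega) hb'.2.2
      have hvd : ∀ j j' : Fin r, j < j' → ω (d j) < ω (d j') := by
        intro j j' hjj
        have hb := hjbound j; have hb' := hjbound j'
        exact accessible_interior_lt hσ (by omega) (by
          have := Fin.lt_def.mp hjj; omega) hb'.2.2
      have hcompat : ∀ (ch : Fin r → (Fin n → Bool)),
          (∀ j j' : Fin r, j < j' → ω (ch j) < ω (ch j')) →
          ∀ ⦃j j' : Fin r⦄ ⦃i i' : Fin m⦄, g i = ch j → g i' = ch j' → (j < j' ↔ i < i') := by
        intro ch hch j j' i i' hi hi'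
        constructor
        · intro hjj
          have h1 := hch j j' hjj
          rw [← hi, ← hi'] at h1
          exact hmono.lt_iff_lt.mp h1
        · intro hii
          have hlt : ω (g i) < ω (g i') := hmono hii
          rcases lt_trichotomy j j' with h | h | h
          · exact h
          · exfalso; subst h; rw [hi, hi'] at hlt; exact lt_irrefl _ hlt
          · exfalso
            have h2 := hch j' j h
            rw [← hi, ← hi'] at h2
            exact lt_irrefl _ (h2.trans hlt)
      have hExtP : ExtP c d g := by
        refine ⟨hginj, ?_, ?_, ?_, hcompat c hvc, hcompat d hvd⟩
        · intro i
          rcases hmemU_cases (g i) (hval i).1 with ⟨j, hj⟩ | ⟨j, hj⟩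
          · exact Or.inl ⟨j, hj⟩
          · exact Or.inr ⟨j, hj⟩
        · intro j
          obtain ⟨i, hi⟩ := hsurj (c j)
            (Finset.mem_union_left _ (Finset.mem_image_of_mem c (Finset.mem_univ j)))
          exact ⟨i, hi⟩
        · intro j
          obtain ⟨i, hi⟩ := hsurj (d j)
            (Finset.mem_union_right _ (Finset.mem_image_of_mem d (Finset.mem_univ j)))
          exact ⟨i, hi⟩
      have hSE : ω ∈ SEvent n α g 1 := by
        refine ⟨by simpa using hmono, ?_⟩
        intro i
        rcases hmemU_cases (g i) (hval i).1 with ⟨j, hj⟩ | ⟨j, hj⟩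
        · rw [hj]
          have hb := hjbound j
          exact accessible_interior_mem hπ hn hb.2.1 hb.2.2
        · rw [hj]
          have hb := hjbound j
          exact accessible_interior_mem hσ hn hb.2.1 hb.2.2
      exact Set.mem_iUnion₂.mpr ⟨g, Finset.mem_filter.mpr ⟨Finset.mem_univ g, hExtP⟩, hSE⟩
  -- ties are null
  have hties : hocMeasure n
      (⋃ (v : Fin n → Bool) (w : Fin n → Bool) (_ : v ≠ w), {ω | ω v = ω w}) = 0 := by
    refine measure_iUnion_null fun v => measure_iUnion_null fun w => ?_
    by_cases hvw : v = w
    · subst hvw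
      have : (⋃ (_ : v ≠ v), {ω : (Fin n → Bool) → ℝ | ω v = ω v}) = ∅ := by
        simp
      rw [this]; exact measure_empty
    · refine measure_mono_null (Set.iUnion_subset fun _ => subset_rfl) (tie_null n hvw)
  -- the measure bound
  have hstep : hocMeasure n {ω | accessible n α 1 ω π ∧ accessible n α 1 ω σ}
      ≤ (Nat.choose (m - dd) (r - dd) : ℝ≥0∞) * ENNReal.ofReal ((1-α)^m / m.factorial) := by
    calc hocMeasure n {ω | accessible n α 1 ω π ∧ accessible n α 1 ω σ}
        ≤ hocMeasure n ((⋃ (v : Fin n → Bool) (w : Fin n → Bool) (_ : v ≠ w), {ω | ω v = ω w})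
            ∪ ⋃ g ∈ Finset.univ.filter (fun g : Fin m → (Fin n → Bool) => ExtP c d g),
                SEvent n α g 1) := measure_mono hcover
      _ ≤ hocMeasure n (⋃ (v : Fin n → Bool) (w : Fin n → Bool) (_ : v ≠ w), {ω | ω v = ω w})
            + hocMeasure n (⋃ g ∈ Finset.univ.filter
                (fun g : Fin m → (Fin n → Bool) => ExtP c d g), SEvent n α g 1) :=
          measure_union_le _ _
      _ = hocMeasure n (⋃ g ∈ Finset.univ.filter
            (fun g : Fin m → (Fin n → Bool) => ExtP c d g), SEvent n α g 1) := by
          rw [hties, zero_add]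
      _ ≤ ∑ g ∈ Finset.univ.filter (fun g : Fin m → (Fin n → Bool) => ExtP c d g),
            hocMeasure n (SEvent n α g 1) := measure_biUnion_finset_le _ _
      _ ≤ (Finset.univ.filter (fun g : Fin m → (Fin n → Bool) => ExtP c d g)).card
            • ENNReal.ofReal ((1-α)^m / m.factorial) := by
          apply Finset.sum_le_card_nsmul
          intro g hgmem
          have hg : ExtP c d g := (Finset.mem_filter.mp hgmem).2
          exact simplex_bound hα0 hα1 hg.1
      _ ≤ (Nat.choose (m - dd) (r - dd) : ℝ≥0∞)
            * ENNReal.ofReal ((1-α)^m / m.factorial) := by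
          rw [nsmul_eq_mul]
          apply mul_le_mul_left
          exact_mod_cast Nat.cast_le.mpr (extP_card hc hcd m)
  have harith : m - dd = 2*n - 2*numComponents (π⁻¹*σ)
      ∧ r - dd = n - numComponents (π⁻¹*σ)
      ∧ m = 2*n - numComponents (π⁻¹*σ) - 1 := by
    rw [hk]
    omega
  obtain ⟨e1, e2, e3⟩ := harith
  rw [e1, e2, e3] at hstep
  refine hstep.trans_eq ?_
  rw [← ENNReal.ofReal_natCast, ← ENNReal.ofReal_mul (Nat.cast_nonneg _)]

end Pair

/-- Second-moment bound for the number of accessible paths in the α-HoC model. -/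
theorem stmt14 (n : ℕ) (hn : 1 ≤ n) (α : ℝ) (hα0 : 0 ≤ α) (hα1 : α ≤ 1) :
    ∫ ω, (numAccessible n α 1 ω : ℝ) ^ 2 ∂(hocMeasure n)
      ≤ ∑ k ∈ Finset.Icc 1 n, (Nat.factorial n : ℝ) * T n k
          * Nat.choose (2 * n - 2 * k) (n - k) * (1 - α) ^ (2 * n - k - 1)
          / Nat.factorial (2 * n - k - 1) := by
  classical
  set A : Equiv.Perm (Fin n) → Set ((Fin n → Bool) → ℝ) :=
    fun π => {ω | accessible n α 1 ω π} with hA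
  have hfitmeas : ∀ v : Fin n → Bool,
      Measurable fun ω : (Fin n → Bool) → ℝ => fitness n α 1 ω v := by
    intro v
    unfold fitness
    by_cases h1 : v = fun _ => false
    · simp only [if_pos h1]
      exact measurable_const
    · by_cases h2 : v = fun _ => true
      · simp only [if_neg h1, if_pos h2]
        exact measurable_const
      · simp only [if_neg h1, if_neg h2]
        exact measurable_pi_apply v
  have hAmeas : ∀ π, MeasurableSet (A π) := by
    intro π
    have hAeq : A π = ⋂ t ∈ Finset.range n,
        {ω : (Fin n → Bool) → ℝ |
          fitness n α 1 ω (pathVertex n π t) < fitness n α 1 ω (pathVertex n π (t+1))} := by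
      ext ω
      simp only [hA, Set.mem_setOf_eq, Set.mem_iInter, Finset.mem_range, accessible]
    rw [hAeq]
    exact MeasurableSet.biInter (Finset.range n).countable_toSet
      (fun t _ => measurableSet_lt (hfitmeas _) (hfitmeas _))
  have hind : ∀ (π σ : Equiv.Perm (Fin n)),
      Integrable (fun ω => Set.indicator (A π ∩ A σ) (fun _ => (1:ℝ)) ω) (hocMeasure n) :=
    fun π σ => (integrable_const (1:ℝ)).indicator ((hAmeas π).inter (hAmeas σ))
  have hX2 : ∀ ω, (numAccessible n α 1 ω : ℝ)^2
      = ∑ π : Equiv.Perm (Fin n), ∑ σ : Equiv.Perm (Fin n),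
          Set.indicator (A π ∩ A σ) (fun _ => (1:ℝ)) ω := by
    intro ω
    have hX : (numAccessible n α 1 ω : ℝ)
        = ∑ π : Equiv.Perm (Fin n), Set.indicator (A π) (fun _ => (1:ℝ)) ω := by
      rw [numAccessible, Finset.card_filter]
      push_cast
      refine Finset.sum_congr rfl fun π _ => ?_
      by_cases h : accessible n α 1 ω π
      · rw [if_pos h, Set.indicator_of_mem (by exact h)]
      · rw [if_neg h, Set.indicator_of_notMem (by exact h)]
    rw [hX, sq, Finset.sum_mul_sum]
    refine Finset.sum_congr rfl fun π _ => Finset.sum_congr rfl fun σ _ => ?_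
    by_cases hπ : ω ∈ A π <;> by_cases hσ : ω ∈ A σ <;>
      simp [Set.indicator, hπ, hσ]
  have hint : ∫ ω, (numAccessible n α 1 ω : ℝ)^2 ∂(hocMeasure n)
      = ∑ π : Equiv.Perm (Fin n), ∑ σ : Equiv.Perm (Fin n),
          ((hocMeasure n) (A π ∩ A σ)).toReal := by
    calc ∫ ω, (numAccessible n α 1 ω : ℝ)^2 ∂(hocMeasure n)
        = ∫ ω, (∑ π : Equiv.Perm (Fin n), ∑ σ : Equiv.Perm (Fin n),
            Set.indicator (A π ∩ A σ) (fun _ => (1:ℝ)) ω) ∂(hocMeasure n) := by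
          exact integral_congr_ae (Filter.EventuallyEq.of_eq (funext hX2))
      _ = ∑ π : Equiv.Perm (Fin n), ∫ ω, (∑ σ : Equiv.Perm (Fin n),
            Set.indicator (A π ∩ A σ) (fun _ => (1:ℝ)) ω) ∂(hocMeasure n) :=
          integral_finset_sum _ (fun π _ => integrable_finset_sum _ (fun σ _ => hind π σ))
      _ = ∑ π : Equiv.Perm (Fin n), ∑ σ : Equiv.Perm (Fin n),
            ∫ ω, Set.indicator (A π ∩ A σ) (fun _ => (1:ℝ)) ω ∂(hocMeasure n) :=
          Finset.sum_congr rfl (fun π _ => integral_finset_sum _ (fun σ _ => hind π σ))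
      _ = ∑ π : Equiv.Perm (Fin n), ∑ σ : Equiv.Perm (Fin n),
            ((hocMeasure n) (A π ∩ A σ)).toReal := by
          refine Finset.sum_congr rfl fun π _ => Finset.sum_congr rfl fun σ _ => ?_
          rw [integral_indicator_const (1:ℝ) ((hAmeas π).inter (hAmeas σ)), smul_eq_mul,
            mul_one, measureReal_def]
  rw [hint]
  set F : ℕ → ℝ := fun k => (Nat.choose (2*n - 2*k) (n - k) : ℝ)
      * ((1-α)^(2*n-k-1) / (Nat.factorial (2*n-k-1))) with hF
  have hpair : ∀ π σ : Equiv.Perm (Fin n),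
      ((hocMeasure n) (A π ∩ A σ)).toReal ≤ F (numComponents (π⁻¹*σ)) := by
    intro π σ
    have h1 := pair_bound hn hα0 hα1 π σ
    have h2 : A π ∩ A σ = {ω | accessible n α 1 ω π ∧ accessible n α 1 ω σ} := rfl
    rw [h2]
    refine ENNReal.toReal_le_of_le_ofReal ?_ h1
    have h3 : (0:ℝ) ≤ 1 - α := by linarith
    positivity
  have hmaps : ∀ ρ : Equiv.Perm (Fin n), numComponents ρ ∈ Finset.Icc 1 n := by
    intro ρ
    rw [Finset.mem_Icc]
    constructor
    · rw [numComponents]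
      refine Finset.card_pos.mpr ⟨n, Finset.mem_filter.mpr ⟨?_, fun i _ => (ρ i).isLt⟩⟩
      rw [Finset.mem_Icc]; omega
    · calc numComponents ρ ≤ (Finset.Icc 1 n).card := Finset.card_filter_le _ _
        _ = n := by rw [Nat.card_Icc]; omega
  have hfiber : ∀ π : Equiv.Perm (Fin n),
      ∑ σ : Equiv.Perm (Fin n), F (numComponents (π⁻¹ * σ))
        = ∑ k ∈ Finset.Icc 1 n, (T n k : ℝ) * F k := by
    intro π
    have h1 : ∑ σ : Equiv.Perm (Fin n), F (numComponents (π⁻¹ * σ))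
        = ∑ ρ : Equiv.Perm (Fin n), F (numComponents ρ) :=
      Fintype.sum_equiv (Equiv.mulLeft π⁻¹) _ _ (fun σ => rfl)
    rw [h1, ← Finset.sum_fiberwise_of_maps_to (g := fun ρ : Equiv.Perm (Fin n) =>
      numComponents ρ) (fun ρ _ => hmaps ρ) (fun ρ => F (numComponents ρ))]
    refine Finset.sum_congr rfl fun k _ => ?_
    have h2 : ∀ ρ ∈ Finset.univ.filter
        (fun ρ : Equiv.Perm (Fin n) => numComponents ρ = k),
        F (numComponents ρ) = F k :=
      fun ρ hρ => by rw [(Finset.mem_filter.mp hρ).2]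
    rw [Finset.sum_congr rfl h2, Finset.sum_const, T, nsmul_eq_mul]
  calc ∑ π : Equiv.Perm (Fin n), ∑ σ : Equiv.Perm (Fin n),
        ((hocMeasure n) (A π ∩ A σ)).toReal
      ≤ ∑ π : Equiv.Perm (Fin n), ∑ σ : Equiv.Perm (Fin n), F (numComponents (π⁻¹*σ)) :=
        Finset.sum_le_sum fun π _ => Finset.sum_le_sum fun σ _ => hpair π σ
    _ = ∑ _π : Equiv.Perm (Fin n), ∑ k ∈ Finset.Icc 1 n, (T n k : ℝ) * F k :=
        Finset.sum_congr rfl fun π _ => hfiber π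
    _ = (Nat.factorial n : ℝ) * ∑ k ∈ Finset.Icc 1 n, (T n k : ℝ) * F k := by
        rw [Finset.sum_const, Finset.card_univ, Fintype.card_perm, Fintype.card_fin,
          nsmul_eq_mul]
    _ = ∑ k ∈ Finset.Icc 1 n, (Nat.factorial n : ℝ) * T n k
          * Nat.choose (2 * n - 2 * k) (n - k) * (1 - α) ^ (2 * n - k - 1)
          / Nat.factorial (2 * n - k - 1) := by
        rw [Finset.mul_sum]
        refine Finset.sum_congr rfl fun k _ => ?_
        rw [hF]
        ring
end
end

section
/- Let Ω be a finite set and R a random subset where each element r is included independently with probability p_r. Let (A_i)_{i∈I} be a finite family of subsets of Ω and B_i the event A_i ⊆ R. Then P(∩_{i∈I} B_i^c) ≥ ∏_{i∈I} P(B_i^c). -/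
open MeasureTheory Finset
open scoped ENNReal

lemma fkg_dual {α β : Type*} [DistribLattice α] [Fintype α] [CommSemiring β] [LinearOrder β]
    [IsStrictOrderedRing β] [ExistsAddOfLE β] (μ f g : α → β) (hμ₀ : 0 ≤ μ) (hf₀ : 0 ≤ f) (hg₀ : 0 ≤ g)
    (hf : Antitone f) (hg : Antitone g)
    (hμ : ∀ a b, μ a * μ b ≤ μ (a ⊓ b) * μ (a ⊔ b)) :
    (∑ a, μ a * f a) * ∑ a, μ a * g a ≤ (∑ a, μ a) * ∑ a, μ a * (f a * g a) := by
  have h := fkg (α := αᵒᵈ) (f ∘ OrderDual.ofDual) (g ∘ OrderDual.ofDual) (μ ∘ OrderDual.ofDual)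
    (fun a => hμ₀ _) (fun a => hf₀ _) (fun a => hg₀ _)
    (fun a b hab => hf hab) (fun a b hab => hg hab)
    (fun a b => (hμ (OrderDual.ofDual a) (OrderDual.ofDual b)).trans_eq (mul_comm _ _))
  exact h

/-- Lower bound in Janson's inequality: for a random subset `R` of a finite set `Ω` with
independent inclusion probabilities `p r`, and events `Bᵢ = {Aᵢ ⊆ R}`, the probability
that none of the `Bᵢ` occur is at least the product of the `P(Bᵢᶜ)`. The random subset is
encoded by its indicator `R : Ω → Bool` under the product of Bernoulli measures. -/
theorem stmt15 {Ω : Type*} [Fintype Ω] {ι : Type*} [Fintype ι]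
    (p : Ω → ℝ≥0∞) (hp : ∀ r, p r ≤ 1) (A : ι → Finset Ω)
    (μ : Measure (Ω → Bool))
    (hμ : μ = Measure.pi fun r => (PMF.bernoulli (p r).toNNReal
      (by simpa using ENNReal.toNNReal_mono ENNReal.one_ne_top (hp r))).toMeasure) :
    ∏ i : ι, μ ({R | ∀ a ∈ A i, R a = true}ᶜ)
      ≤ μ (⋂ i : ι, {R | ∀ a ∈ A i, R a = true}ᶜ) := by
  classical
  haveI hprob : IsProbabilityMeasure μ := by subst hμ; infer_instance
  -- the weight of a single point
  have hsing : ∀ R0 : Ω → Bool, μ {R0} = ∏ r, cond (R0 r) (p r) (1 - p r) := by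
    intro R0
    have h1 : ({R0} : Set (Ω → Bool)) = Set.pi Set.univ fun r => {R0 r} := by
      ext R; simp [funext_iff, Set.mem_pi, eq_comm]
    rw [hμ, h1, Measure.pi_pi]
    refine Finset.prod_congr rfl fun r _ => ?_
    rw [PMF.toMeasure_apply_singleton _ _ (measurableSet_singleton _)]
    show cond (R0 r) (((p r).toNNReal : ℝ≥0∞)) (1 - ((p r).toNNReal : ℝ≥0∞)) = _
    rw [ENNReal.coe_toNNReal (ne_top_of_le_ne_top ENNReal.one_ne_top (hp r))]
  -- measure of any set is sum of point weights
  have hmeas : ∀ S : Set (Ω → Bool),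
      μ S = ∑ R ∈ Finset.univ.filter (· ∈ S), μ {R} := by
    intro S
    have hS : μ S = μ (⋃ R ∈ Finset.univ.filter (· ∈ S), ({R} : Set (Ω → Bool))) := by
      congr 1; ext R; simp
    rw [hS, measure_biUnion_finset]
    · intro a _ b _ hab
      exact Set.disjoint_singleton.mpr hab
    · intro b _; exact measurableSet_singleton _
  -- real-valued weights
  set v : (Ω → Bool) → ℝ := fun R => (μ {R}).toReal with hv
  have hv0 : ∀ R, 0 ≤ v R := fun R => ENNReal.toReal_nonneg
  have hE : ∀ S : Set (Ω → Bool),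
      (μ S).toReal = ∑ R, v R * (if R ∈ S then (1:ℝ) else 0) := by
    intro S
    rw [hmeas S, ENNReal.toReal_sum (fun R _ => measure_ne_top μ _), Finset.sum_filter]
    refine Finset.sum_congr rfl fun R _ => ?_
    by_cases h : R ∈ S
    · simp only [if_pos h, mul_one, hv]
    · simp only [if_neg h, mul_zero]
  have hsum1 : ∑ R, v R = 1 := by
    have h := hE Set.univ
    rw [measure_univ, ENNReal.toReal_one] at h
    simpa using h.symm
  -- log-supermodularity (in fact equality) of the weights
  have hvmod : ∀ a b : Ω → Bool, v a * v b ≤ v (a ⊓ b) * v (a ⊔ b) := by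
    intro a b
    have key : μ {a} * μ {b} = μ {a ⊓ b} * μ {a ⊔ b} := by
      rw [hsing a, hsing b, hsing (a ⊓ b), hsing (a ⊔ b), ← Finset.prod_mul_distrib,
        ← Finset.prod_mul_distrib]
      refine Finset.prod_congr rfl fun r _ => ?_
      have hinf : (a ⊓ b) r = (a r && b r) := rfl
      have hsup : (a ⊔ b) r = (a r || b r) := rfl
      rw [hinf, hsup]
      cases a r <;> cases b r <;> simp [mul_comm]
    simp only [hv]
    rw [← ENNReal.toReal_mul, ← ENNReal.toReal_mul, key]
  -- the indicator functions of the complements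
  set f : ι → (Ω → Bool) → ℝ :=
    fun i R => if (∀ a ∈ A i, R a = true) then (0:ℝ) else 1 with hf
  have hf0 : ∀ (i : ι) (R), 0 ≤ f i R := by
    intro i R
    simp only [hf]
    split <;> norm_num
  have hfanti : ∀ i, Antitone (f i) := by
    intro i R R' hRR'
    simp only [hf]
    by_cases h : ∀ a ∈ A i, R a = true
    · have h' : ∀ a ∈ A i, R' a = true := fun a ha =>
        le_antisymm (Bool.le_true _) (h a ha ▸ hRR' a)
      rw [if_pos h, if_pos h']
    · rw [if_neg h]
      split <;> norm_num
  have hprod0 : ∀ (s : Finset ι) (R), 0 ≤ ∏ i ∈ s, f i R :=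
    fun s R => Finset.prod_nonneg fun i _ => hf0 i R
  have hprodanti : ∀ s : Finset ι, Antitone (fun R => ∏ i ∈ s, f i R) := by
    intro s R R' hRR'
    exact Finset.prod_le_prod (fun i _ => hf0 i R') (fun i _ => hfanti i hRR')
  -- main induction
  have main : ∀ s : Finset ι,
      ∏ i ∈ s, (∑ R, v R * f i R) ≤ ∑ R, v R * ∏ i ∈ s, f i R := by
    intro s
    induction s using Finset.induction with
    | empty => simp [hsum1]
    | @insert j s hj ih =>
      rw [Finset.prod_insert hj]
      have h1 : (∑ R, v R * f j R) * ∏ i ∈ s, (∑ R, v R * f i R)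
          ≤ (∑ R, v R * f j R) * ∑ R, v R * ∏ i ∈ s, f i R :=
        mul_le_mul_of_nonneg_left ih
          (Finset.sum_nonneg fun R _ => mul_nonneg (hv0 R) (hf0 j R))
      refine h1.trans ?_
      have h2 := fkg_dual v (f j) (fun R => ∏ i ∈ s, f i R)
        hv0 (fun R => hf0 j R) (fun R => hprod0 s R) (hfanti j) (hprodanti s) hvmod
      rw [hsum1, one_mul] at h2
      refine h2.trans_eq ?_
      refine Finset.sum_congr rfl fun R _ => ?_
      show v R * (f j R * ∏ i ∈ s, f i R) = v R * ∏ i ∈ insert j s, f i R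
      rw [Finset.prod_insert hj]
  -- assemble
  have hfin1 : (∏ i : ι, μ ({R | ∀ a ∈ A i, R a = true}ᶜ)) ≠ ⊤ := by
    refine ne_top_of_le_ne_top ENNReal.one_ne_top ?_
    calc ∏ i : ι, μ ({R | ∀ a ∈ A i, R a = true}ᶜ) ≤ ∏ _i : ι, (1 : ℝ≥0∞) :=
          Finset.prod_le_prod' fun i _ => prob_le_one
      _ = 1 := by simp
  rw [← ENNReal.toReal_le_toReal hfin1 (measure_ne_top μ _), ENNReal.toReal_prod]
  have hLHS : ∀ i, (μ ({R | ∀ a ∈ A i, R a = true}ᶜ)).toReal = ∑ R, v R * f i R := by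
    intro i
    rw [hE]
    refine Finset.sum_congr rfl fun R _ => ?_
    congr 1
    simp only [hf, Set.mem_compl_iff, Set.mem_setOf_eq]
    by_cases h : ∀ a ∈ A i, R a = true
    · rw [if_neg (not_not_intro h), if_pos h]
    · rw [if_pos h, if_neg h]
  have hRHS : (μ (⋂ i : ι, {R | ∀ a ∈ A i, R a = true}ᶜ)).toReal
      = ∑ R, v R * ∏ i : ι, f i R := by
    rw [hE]
    refine Finset.sum_congr rfl fun R _ => ?_
    congr 1
    by_cases h : ∀ i : ι, ¬ ∀ a ∈ A i, R a = true
    · rw [if_pos (by simpa using h)]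
      exact (Finset.prod_eq_one fun i _ => by simp only [hf]; exact if_neg (h i)).symm
    · push_neg at h
      obtain ⟨i, hi⟩ := h
      rw [if_neg (by simpa using ⟨i, hi⟩)]
      exact (Finset.prod_eq_zero (Finset.mem_univ i) (by simp only [hf]; exact if_pos hi)).symm
  rw [hRHS]
  calc ∏ i : ι, (μ ({R | ∀ a ∈ A i, R a = true}ᶜ)).toReal
      = ∏ i : ι, ∑ R, v R * f i R := Finset.prod_congr rfl fun i _ => hLHS i
    _ ≤ _ := main Finset.univ
end

section
/- Generate fitnesses on the directed n-hypercube as in the α-HoC model, then independently remove each vertex other than all-zeroes and all-ones with probability δ. The probability that there exists an accessible path from all-zeroes to all-ones using only remaining vertices equals P(n, 1-(1-α)(1-δ)). -/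
open MeasureTheory
open scoped Classical ENNReal

noncomputable section

/-- Vertex-removal measure: each vertex is kept (`true`) independently with probability
`1 - δ`, i.e. removed with probability `δ`. -/
def removalMeasure (n : ℕ) (q : ℝ≥0∞) (h : q ≤ 1) : Measure ((Fin n → Bool) → Bool) :=
  Measure.pi fun _ => (PMF.bernoulli q.toNNReal
    (by simpa using ENNReal.toNNReal_mono ENNReal.one_ne_top h)).toMeasure

open Set

def gtf (α δ : ℝ) (u : ℝ) : ℝ :=
  if α < u then (1 - (1-α)*(1-δ)) + (1-δ)*(u-α) else (1-δ)*u

def gff (α δ : ℝ) (u : ℝ) : ℝ := δ*u + (1-δ)*α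

def gG (α δ : ℝ) (p : ℝ × Bool) : ℝ := if p.2 then gtf α δ p.1 else gff α δ p.1

lemma gtf_meas (α δ : ℝ) : Measurable (gtf α δ) := by
  unfold gtf
  exact Measurable.ite (measurableSet_Ioi) (by fun_prop) (by fun_prop)

lemma gff_meas (α δ : ℝ) : Measurable (gff α δ) := by unfold gff; fun_prop

lemma gG_meas (α δ : ℝ) : Measurable (gG α δ) := by
  unfold gG
  exact Measurable.ite (by
    have : {p : ℝ × Bool | p.2 = true} = (Prod.snd) ⁻¹' {true} := rfl
    simpa [this] using measurable_snd (MeasurableSet.of_discrete (s := ({true} : Set Bool))))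
    ((gtf_meas α δ).comp measurable_fst) ((gff_meas α δ).comp measurable_fst)

lemma map_affine_volume (a b : ℝ) (ha : 0 < a) :
    Measure.map (fun x => a*x + b) volume = ENNReal.ofReal a⁻¹ • volume := by
  have h1 : (fun x : ℝ => a*x + b) = (fun x : ℝ => b + x) ∘ (fun x : ℝ => a*x) := by
    funext x; simp [Function.comp]; ring
  rw [h1, ← Measure.map_map (by fun_prop) (by fun_prop)]
  rw [show (fun x : ℝ => a * x) = (a * ·) from rfl, Real.map_volume_mul_left ha.ne']
  rw [Measure.map_smul]
  rw [show (fun x : ℝ => b + x) = (b + ·) from rfl, map_add_left_eq_self volume b]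
  rw [abs_of_pos (inv_pos.mpr ha)]

lemma map_affine_restrict (a b : ℝ) (ha : 0 < a) {t : Set ℝ} (ht : MeasurableSet t) :
    Measure.map (fun x => a*x + b) (volume.restrict ((fun x => a*x+b) ⁻¹' t))
      = ENNReal.ofReal a⁻¹ • volume.restrict t := by
  rw [← Measure.restrict_map (by fun_prop) ht, map_affine_volume a b ha,
    Measure.restrict_smul]

lemma key_identity (α δ : ℝ) (hα0 : 0 ≤ α) (hα1 : α ≤ 1) (hδ0 : 0 ≤ δ) (hδ1 : δ < 1) :
    ENNReal.ofReal (1-δ) • Measure.map (gtf α δ) (volume.restrict (Icc 0 1))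
      + (1 - ENNReal.ofReal (1-δ)) • Measure.map (gff α δ) (volume.restrict (Icc 0 1))
      = volume.restrict (Icc (0:ℝ) 1) := by
  have hd : (0:ℝ) < 1 - δ := by linarith
  set a' : ℝ := 1 - (1-α)*(1-δ) with ha'
  have ha'1 : a' ≤ 1 := by nlinarith
  have hc0 : (0:ℝ) ≤ (1-δ)*α := by positivity
  have hca' : (1-δ)*α ≤ a' := by nlinarith
  -- split the uniform measure
  have hdisj : Disjoint (Icc (0:ℝ) α) (Ioc α 1) :=
    Set.disjoint_left.mpr fun x hx hx' => absurd hx.2 (not_le.mpr hx'.1)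
  have hsplit : volume.restrict (Icc (0:ℝ) 1)
      = volume.restrict (Icc 0 α) + volume.restrict (Ioc α 1) := by
    rw [← Measure.restrict_union hdisj measurableSet_Ioc, Icc_union_Ioc_eq_Icc hα0 hα1]
  -- first piece of gtf
  have h2 : Measure.map (gtf α δ) (volume.restrict (Icc 0 α))
      = ENNReal.ofReal (1-δ)⁻¹ • volume.restrict (Icc 0 ((1-δ)*α)) := by
    have hcong : Measure.map (gtf α δ) (volume.restrict (Icc 0 α))
        = Measure.map (fun x => (1-δ)*x + 0) (volume.restrict (Icc 0 α)) := by
      refine Measure.map_congr ?_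
      filter_upwards [ae_restrict_mem measurableSet_Icc] with x hx
      simp only [gtf, if_neg (not_lt.mpr hx.2)]; ring
    have hpre : (fun x : ℝ => (1-δ)*x + 0) ⁻¹' (Icc 0 ((1-δ)*α)) = Icc 0 α := by
      ext x
      simp only [mem_preimage, mem_Icc, add_zero]
      constructor <;> rintro ⟨h1, h2⟩ <;> constructor <;> nlinarith
    rw [hcong, ← hpre, map_affine_restrict _ _ hd measurableSet_Icc]
  -- second piece of gtf
  have h3 : Measure.map (gtf α δ) (volume.restrict (Ioc α 1))
      = ENNReal.ofReal (1-δ)⁻¹ • volume.restrict (Ioc a' 1) := by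
    have hcong : Measure.map (gtf α δ) (volume.restrict (Ioc α 1))
        = Measure.map (fun x => (1-δ)*x + (a' - (1-δ)*α)) (volume.restrict (Ioc α 1)) := by
      refine Measure.map_congr ?_
      filter_upwards [ae_restrict_mem measurableSet_Ioc] with x hx
      simp only [gtf, if_pos hx.1, ha']; ring
    have hpre : (fun x : ℝ => (1-δ)*x + (a' - (1-δ)*α)) ⁻¹' (Ioc a' 1) = Ioc α 1 := by
      ext x
      simp only [mem_preimage, mem_Ioc, ha']
      constructor <;> rintro ⟨h1, h2⟩ <;> constructor <;> nlinarith
    rw [hcong, ← hpre, map_affine_restrict _ _ hd measurableSet_Ioc]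
  -- gff part
  have h4 : (1 - ENNReal.ofReal (1-δ)) • Measure.map (gff α δ) (volume.restrict (Icc 0 1))
      = volume.restrict (Ioc ((1-δ)*α) a') := by
    by_cases hδ : δ = 0
    · subst hδ
      have : a' = α := by rw [ha']; ring
      simp [this]
    · have hδpos : 0 < δ := lt_of_le_of_ne hδ0 (Ne.symm hδ)
      have hq : (1 : ℝ≥0∞) - ENNReal.ofReal (1-δ) = ENNReal.ofReal δ := by
        rw [← ENNReal.ofReal_one, ← ENNReal.ofReal_sub _ (le_of_lt hd)]
        norm_num
      have hpre : (fun x : ℝ => δ*x + (1-δ)*α) ⁻¹' (Icc ((1-δ)*α) a') = Icc 0 1 := by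
        ext x
        simp only [mem_preimage, mem_Icc, ha']
        constructor <;> rintro ⟨h1, h2⟩ <;> constructor <;> nlinarith
      have : Measure.map (gff α δ) (volume.restrict (Icc 0 1))
          = ENNReal.ofReal δ⁻¹ • volume.restrict (Icc ((1-δ)*α) a') := by
        rw [show gff α δ = fun x => δ*x + (1-δ)*α from rfl, ← hpre,
          map_affine_restrict _ _ hδpos measurableSet_Icc]
      rw [this, hq, smul_smul, ← ENNReal.ofReal_mul hδ0,
        mul_inv_cancel₀ hδpos.ne', ENNReal.ofReal_one, one_smul,
        ← MeasureTheory.restrict_Ioc_eq_restrict_Icc]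
  -- assemble
  have hcoef : ENNReal.ofReal (1-δ) * ENNReal.ofReal (1-δ)⁻¹ = 1 := by
    rw [← ENNReal.ofReal_mul hd.le, mul_inv_cancel₀ hd.ne', ENNReal.ofReal_one]
  calc ENNReal.ofReal (1-δ) • Measure.map (gtf α δ) (volume.restrict (Icc 0 1))
        + (1 - ENNReal.ofReal (1-δ)) • Measure.map (gff α δ) (volume.restrict (Icc 0 1))
      = (ENNReal.ofReal (1-δ) • ENNReal.ofReal (1-δ)⁻¹ • volume.restrict (Icc 0 ((1-δ)*α))
          + ENNReal.ofReal (1-δ) • ENNReal.ofReal (1-δ)⁻¹ • volume.restrict (Ioc a' 1))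
        + volume.restrict (Ioc ((1-δ)*α) a') := by
        rw [h4, hsplit, Measure.map_add _ _ (gtf_meas α δ), h2, h3, smul_add]
    _ = (volume.restrict (Icc 0 ((1-δ)*α)) + volume.restrict (Ioc a' 1))
        + volume.restrict (Ioc ((1-δ)*α) a') := by
        simp only [smul_smul, hcoef, one_smul]
    _ = (volume.restrict (Icc 0 ((1-δ)*α)) + volume.restrict (Ioc ((1-δ)*α) a'))
        + volume.restrict (Ioc a' 1) := by abel
    _ = volume.restrict (Icc (0:ℝ) 1) := by
        rw [← Measure.restrict_union ?d1 measurableSet_Ioc,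
          Icc_union_Ioc_eq_Icc hc0 hca',
          ← Measure.restrict_union ?d2 measurableSet_Ioc,
          Icc_union_Ioc_eq_Icc (le_trans hc0 hca') ha'1]
        case d1 => exact Set.disjoint_left.mpr fun x hx hx' => absurd hx.2 (not_le.mpr hx'.1)
        case d2 => exact Set.disjoint_left.mpr fun x hx hx' => absurd hx.2 (not_le.mpr hx'.1)

lemma bern_apply (q : ℝ≥0∞) (h : q ≤ 1) (S : Set Bool) :
    (PMF.bernoulli q.toNNReal (by simpa using ENNReal.toNNReal_mono ENNReal.one_ne_top h)).toMeasure S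
      = (if false ∈ S then 1 - q else 0) + (if true ∈ S then q else 0) := by
  rw [PMF.toMeasure_apply _ MeasurableSet.of_discrete, tsum_bool]
  have hq : (q.toNNReal : ℝ≥0∞) = q := ENNReal.coe_toNNReal (ne_top_of_le_ne_top ENNReal.one_ne_top h)
  simp [Set.indicator_apply, PMF.bernoulli, PMF.ofFintype_apply, ENNReal.coe_sub, hq]

lemma mp_G (α δ : ℝ) (hα0 : 0 ≤ α) (hα1 : α ≤ 1) (hδ0 : 0 ≤ δ) (hδ1 : δ < 1)
    (hq : ENNReal.ofReal (1-δ) ≤ 1) :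
    MeasurePreserving (gG α δ)
      ((volume.restrict (Icc (0:ℝ) 1)).prod
        (PMF.bernoulli (ENNReal.ofReal (1-δ)).toNNReal (by simpa using ENNReal.toNNReal_mono ENNReal.one_ne_top hq)).toMeasure)
      (volume.restrict (Icc (0:ℝ) 1)) := by
  set q : ℝ≥0∞ := ENNReal.ofReal (1-δ) with hqdef
  refine ⟨gG_meas α δ, ?_⟩
  ext s hs
  rw [Measure.map_apply (gG_meas α δ) hs, Measure.prod_apply ((gG_meas α δ) hs)]
  have h1 : ∀ x : ℝ, (PMF.bernoulli q.toNNReal (by simpa using ENNReal.toNNReal_mono ENNReal.one_ne_top hq)).toMeasure (Prod.mk x ⁻¹' (gG α δ ⁻¹' s))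
      = Set.indicator ((gff α δ)⁻¹' s) (fun _ => 1-q) x
        + Set.indicator ((gtf α δ)⁻¹' s) (fun _ => q) x := by
    intro x
    rw [show (Prod.mk x ⁻¹' (gG α δ ⁻¹' s)) = {b : Bool | gG α δ (x, b) ∈ s} from rfl,
      bern_apply q hq]
    simp [Set.indicator_apply, Set.mem_preimage, gG]
  calc ∫⁻ x, (PMF.bernoulli q.toNNReal (by simpa using ENNReal.toNNReal_mono ENNReal.one_ne_top hq)).toMeasure (Prod.mk x ⁻¹' (gG α δ ⁻¹' s))
        ∂(volume.restrict (Icc (0:ℝ) 1))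
      = ∫⁻ x, (Set.indicator ((gff α δ)⁻¹' s) (fun _ => 1-q) x
          + Set.indicator ((gtf α δ)⁻¹' s) (fun _ => q) x)
          ∂(volume.restrict (Icc (0:ℝ) 1)) := lintegral_congr h1
    _ = (1-q) * (volume.restrict (Icc (0:ℝ) 1)) ((gff α δ)⁻¹' s)
        + q * (volume.restrict (Icc (0:ℝ) 1)) ((gtf α δ)⁻¹' s) := by
        rw [lintegral_add_left (measurable_const.indicator (gff_meas α δ hs)),
          lintegral_indicator_const (gff_meas α δ hs),
          lintegral_indicator_const (gtf_meas α δ hs)]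
    _ = (q • Measure.map (gtf α δ) (volume.restrict (Icc (0:ℝ) 1))
        + (1-q) • Measure.map (gff α δ) (volume.restrict (Icc (0:ℝ) 1))) s := by
        rw [Measure.add_apply, Measure.smul_apply, Measure.smul_apply,
          Measure.map_apply (gtf_meas α δ) hs, Measure.map_apply (gff_meas α δ) hs,
          smul_eq_mul, smul_eq_mul]
        ring
    _ = (volume.restrict (Icc (0:ℝ) 1)) s := by
        rw [hqdef, key_identity α δ hα0 hα1 hδ0 hδ1]

lemma pv_zero (n : ℕ) (π : Equiv.Perm (Fin n)) : pathVertex n π 0 = fun _ => false := by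
  funext i; simp [pathVertex]

lemma pv_top (n : ℕ) (π : Equiv.Perm (Fin n)) {t : ℕ} (h : n ≤ t) :
    pathVertex n π t = fun _ => true := by
  funext i; simp only [pathVertex, decide_eq_true_eq]
  exact lt_of_lt_of_le (π.symm i).isLt h

lemma pv_ne_bot {n : ℕ} (hn : 1 ≤ n) (π : Equiv.Perm (Fin n)) {t : ℕ} (h : 0 < t) :
    pathVertex n π t ≠ (fun _ => false) := by
  intro he
  have := congrFun he (π ⟨0, hn⟩)
  simp [pathVertex, h] at this

lemma pv_ne_top {n : ℕ} (π : Equiv.Perm (Fin n)) {t : ℕ} (h : t < n) :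
    pathVertex n π t ≠ (fun _ => true) := by
  intro he
  have := congrFun he (π ⟨t, h⟩)
  simp [pathVertex] at this

lemma fit_zero (n : ℕ) (a c : ℝ) (ω : (Fin n → Bool) → ℝ) (π : Equiv.Perm (Fin n)) :
    fitness n a c ω (pathVertex n π 0) = a := by
  rw [pv_zero]; simp [fitness]

lemma fit_top {n : ℕ} (hn : 1 ≤ n) (a c : ℝ) (ω : (Fin n → Bool) → ℝ)
    (π : Equiv.Perm (Fin n)) {t : ℕ} (h : n ≤ t) :
    fitness n a c ω (pathVertex n π t) = c := by
  rw [pv_top n π h]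
  unfold fitness
  rw [if_neg, if_pos rfl]
  intro he
  have := congrFun he ⟨0, hn⟩
  simp at this

lemma fit_mid {n : ℕ} (hn : 1 ≤ n) (a c : ℝ) (ω : (Fin n → Bool) → ℝ)
    (π : Equiv.Perm (Fin n)) {t : ℕ} (h1 : 0 < t) (h2 : t < n) :
    fitness n a c ω (pathVertex n π t) = ω (pathVertex n π t) := by
  unfold fitness
  rw [if_neg (pv_ne_bot hn π h1), if_neg (pv_ne_top π h2)]

lemma acc_mono {n : ℕ} {a c : ℝ} {ω : (Fin n → Bool) → ℝ} {π : Equiv.Perm (Fin n)}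
    (h : accessible n a c ω π) :
    ∀ s t, s < t → t ≤ n →
      fitness n a c ω (pathVertex n π s) < fitness n a c ω (pathVertex n π t) := by
  intro s t hst htn
  induction t with
  | zero => omega
  | succ t ih =>
    have ht : fitness n a c ω (pathVertex n π t) < fitness n a c ω (pathVertex n π (t+1)) :=
      h t (by omega)
    rcases Nat.lt_or_ge s t with hlt | hge
    · exact lt_trans (ih hlt (by omega)) ht
    · have : s = t := by omega
      rw [this]; exact ht


lemma core_equiv (n : ℕ) (hn : 1 ≤ n) (α δ : ℝ) (hα0 : 0 ≤ α) (hα1 : α ≤ 1)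
    (hδ0 : 0 ≤ δ) (hδ1 : δ < 1) (f : (Fin n → Bool) → ℝ × Bool)
    (hle : ∀ v, (f v).1 ≤ 1) :
    ((∃ π : Equiv.Perm (Fin n), accessible n α 1 (fun v => (f v).1) π ∧
        ∀ t ∈ Finset.Ioo 0 n, (f (pathVertex n π t)).2 = true)
      ↔ (∃ π : Equiv.Perm (Fin n),
          accessible n (1-(1-α)*(1-δ)) 1 (fun v => gG α δ (f v)) π)) := by
  have hd : (0:ℝ) < 1 - δ := by linarith
  set a' : ℝ := 1 - (1-α)*(1-δ) with ha'
  set ω : (Fin n → Bool) → ℝ := fun v => (f v).1 with hω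
  set ω' : (Fin n → Bool) → ℝ := fun v => gG α δ (f v) with hω'
  have hgval : ∀ v, (f v).2 = true → α < ω v → ω' v = a' + (1-δ)*(ω v - α) := by
    intro v hb hu
    simp only [hω', gG, hb, if_true, gtf, if_pos (show α < (f v).1 from hu), ha', hω]
  constructor
  · rintro ⟨π, hacc, hkept⟩
    refine ⟨π, ?_⟩
    have hint : ∀ s, 0 < s → s < n →
        α < ω (pathVertex n π s) ∧ ω (pathVertex n π s) < 1 ∧
          ω' (pathVertex n π s) = a' + (1-δ)*(ω (pathVertex n π s) - α) := by
      intro s hs1 hs2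
      have hlo : α < ω (pathVertex n π s) := by
        have := acc_mono hacc 0 s hs1 (le_of_lt hs2)
        rwa [fit_zero, fit_mid hn _ _ _ _ hs1 hs2] at this
      have hhi : ω (pathVertex n π s) < 1 := by
        have := acc_mono hacc s n hs2 le_rfl
        rwa [fit_mid hn _ _ _ _ hs1 hs2, fit_top hn _ _ _ _ le_rfl] at this
      exact ⟨hlo, hhi, hgval _ (hkept s (Finset.mem_Ioo.mpr ⟨hs1, hs2⟩)) hlo⟩
    intro t htn
    rcases Nat.eq_zero_or_pos t with rfl | ht0
    · rcases Nat.lt_or_ge 1 n with h1n | h1n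
      · rw [fit_zero, fit_mid hn _ _ _ _ Nat.one_pos h1n]
        obtain ⟨hlo, _, heq⟩ := hint 1 Nat.one_pos h1n
        rw [heq]; nlinarith
      · have hn1 : n = 1 := by omega
        rw [fit_zero, fit_top hn _ _ _ _ (by omega)]
        have := hacc 0 htn
        rw [fit_zero, fit_top hn _ _ _ _ (by omega : n ≤ 0 + 1)] at this
        nlinarith
    · rcases Nat.lt_or_ge (t+1) n with htn1 | htn1
      · rw [fit_mid hn _ _ _ _ ht0 htn, fit_mid hn _ _ _ _ (by omega) htn1]
        obtain ⟨hlo, _, heq⟩ := hint t ht0 htn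
        obtain ⟨hlo', _, heq'⟩ := hint (t+1) (by omega) htn1
        have := hacc t htn
        rw [fit_mid hn _ _ _ _ ht0 htn, fit_mid hn _ _ _ _ (by omega) htn1] at this
        rw [heq, heq']; nlinarith
      · rw [fit_mid hn _ _ _ _ ht0 htn, fit_top hn _ _ _ _ htn1]
        obtain ⟨hlo, hhi, heq⟩ := hint t ht0 htn
        rw [heq]; nlinarith
  · rintro ⟨π, hacc⟩
    have hint : ∀ s, 0 < s → s < n →
        (f (pathVertex n π s)).2 = true ∧ α < ω (pathVertex n π s) ∧
          ω' (pathVertex n π s) = a' + (1-δ)*(ω (pathVertex n π s) - α) := by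
      intro s hs1 hs2
      have hlo : a' < ω' (pathVertex n π s) := by
        have := acc_mono hacc 0 s hs1 (le_of_lt hs2)
        rwa [fit_zero, fit_mid hn _ _ _ _ hs1 hs2] at this
      have hub : ω (pathVertex n π s) ≤ 1 := hle _
      have hbu : (f (pathVertex n π s)).2 = true ∧ α < ω (pathVertex n π s) := by
        by_cases hb : (f (pathVertex n π s)).2 = true
        · refine ⟨hb, ?_⟩
          by_contra hcon
          push_neg at hcon
          have : ω' (pathVertex n π s) = (1-δ) * ω (pathVertex n π s) := by
            simp only [hω', gG, hb, if_true, gtf, if_neg (not_lt.mpr (show (f (pathVertex n π s)).1 ≤ α from hcon)), hω]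
          rw [this] at hlo; nlinarith
        · have hb' : (f (pathVertex n π s)).2 = false := by
            cases h : (f (pathVertex n π s)).2
            · rfl
            · exact absurd h hb
          have : ω' (pathVertex n π s) = δ * ω (pathVertex n π s) + (1-δ)*α := by
            simp only [hω', gG, hb', Bool.false_eq_true, if_false, gff, hω]
          rw [this] at hlo; nlinarith
      exact ⟨hbu.1, hbu.2, hgval _ hbu.1 hbu.2⟩
    refine ⟨π, ?_, fun t ht => (hint t (Finset.mem_Ioo.mp ht).1 (Finset.mem_Ioo.mp ht).2).1⟩
    intro t htn
    rcases Nat.eq_zero_or_pos t with rfl | ht0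
    · rcases Nat.lt_or_ge 1 n with h1n | h1n
      · rw [fit_zero, fit_mid hn _ _ _ _ Nat.one_pos h1n]
        exact (hint 1 Nat.one_pos h1n).2.1
      · rw [fit_zero, fit_top hn _ _ _ _ (by omega : n ≤ 0 + 1)]
        have := hacc 0 htn
        rw [fit_zero, fit_top hn _ _ _ _ (by omega : n ≤ 0 + 1)] at this
        nlinarith
    · rcases Nat.lt_or_ge (t+1) n with htn1 | htn1
      · rw [fit_mid hn _ _ _ _ ht0 htn, fit_mid hn _ _ _ _ (by omega) htn1]
        obtain ⟨_, hlo, heq⟩ := hint t ht0 htn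
        obtain ⟨_, hlo', heq'⟩ := hint (t+1) (by omega) htn1
        have := hacc t htn
        rw [fit_mid hn _ _ _ _ ht0 htn, fit_mid hn _ _ _ _ (by omega) htn1,
          heq, heq'] at this
        nlinarith
      · rw [fit_mid hn _ _ _ _ ht0 htn, fit_top hn _ _ _ _ htn1]
        obtain ⟨_, hlo, heq⟩ := hint t ht0 htn
        have := hacc t htn
        rw [fit_mid hn _ _ _ _ ht0 htn, fit_top hn _ _ _ _ htn1, heq] at this
        nlinarith

/-- Assign fitnesses as in α-HoC, then independently remove each interior vertex with
probability δ. The probability that an accessible path survives (all its interior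
vertices kept) equals `P(n, 1-(1-α)(1-δ))`. -/
theorem stmt19 (n : ℕ) (hn : 1 ≤ n) (α δ : ℝ) (hα0 : 0 ≤ α) (hα1 : α ≤ 1)
    (hδ0 : 0 ≤ δ) (hδ1 : δ < 1) :
    ((hocMeasure n).prod
        (removalMeasure n (ENNReal.ofReal (1 - δ))
          (ENNReal.ofReal_le_one.mpr (by linarith))))
      {p | ∃ π : Equiv.Perm (Fin n), accessible n α 1 p.1 π ∧
        ∀ t ∈ Finset.Ioo 0 n, p.2 (pathVertex n π t) = true}
      = hocMeasure n
          {ω | ∃ π : Equiv.Perm (Fin n), accessible n (1 - (1 - α) * (1 - δ)) 1 ω π} := by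
  classical
  have hd : (0:ℝ) < 1 - δ := by linarith
  set q : ℝ≥0∞ := ENNReal.ofReal (1-δ) with hqdef
  have hq : q ≤ 1 := ENNReal.ofReal_le_one.mpr (by linarith)
  set unif : Measure ℝ := volume.restrict (Icc (0:ℝ) 1) with hunif
  set bern : Measure Bool := (PMF.bernoulli q.toNNReal (by simpa using ENNReal.toNNReal_mono ENNReal.one_ne_top hq)).toMeasure with hbern
  -- measurability of fitness
  have hfit : ∀ (a c : ℝ) (v : Fin n → Bool),
      Measurable (fun ω : (Fin n → Bool) → ℝ => fitness n a c ω v) := by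
    intro a c v
    unfold fitness
    split_ifs with h1 h2
    · exact measurable_const
    · exact measurable_const
    · exact measurable_pi_apply v
  -- measurability of the two events
  have hE : MeasurableSet {p : ((Fin n → Bool) → ℝ) × ((Fin n → Bool) → Bool) |
      ∃ π : Equiv.Perm (Fin n), accessible n α 1 p.1 π ∧
        ∀ t ∈ Finset.Ioo 0 n, p.2 (pathVertex n π t) = true} := by
    have hrw : {p : ((Fin n → Bool) → ℝ) × ((Fin n → Bool) → Bool) |
        ∃ π : Equiv.Perm (Fin n), accessible n α 1 p.1 π ∧
          ∀ t ∈ Finset.Ioo 0 n, p.2 (pathVertex n π t) = true}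
        = ⋃ π : Equiv.Perm (Fin n),
            ((⋂ t, ⋂ (_ : t < n),
                {p : ((Fin n → Bool) → ℝ) × ((Fin n → Bool) → Bool) |
                  fitness n α 1 p.1 (pathVertex n π t)
                    < fitness n α 1 p.1 (pathVertex n π (t+1))})
              ∩ ⋂ t, ⋂ (_ : t ∈ Finset.Ioo 0 n),
                {p : ((Fin n → Bool) → ℝ) × ((Fin n → Bool) → Bool) |
                  p.2 (pathVertex n π t) = true}) := by
      ext p
      simp only [Set.mem_setOf_eq, Set.mem_iUnion, Set.mem_inter_iff, Set.mem_iInter,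
        accessible]
    rw [hrw]
    refine MeasurableSet.iUnion fun π => MeasurableSet.inter ?_ ?_
    · exact MeasurableSet.iInter fun t => MeasurableSet.iInter fun _ =>
        measurableSet_lt ((hfit α 1 _).comp measurable_fst) ((hfit α 1 _).comp measurable_fst)
    · refine MeasurableSet.iInter fun t => MeasurableSet.iInter fun _ => ?_
      have hpre : {p : ((Fin n → Bool) → ℝ) × ((Fin n → Bool) → Bool) |
          p.2 (pathVertex n π t) = true}
          = (fun p : ((Fin n → Bool) → ℝ) × ((Fin n → Bool) → Bool) =>
              p.2 (pathVertex n π t)) ⁻¹' {true} := rfl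
      rw [hpre]
      exact ((measurable_pi_apply (pathVertex n π t)).comp measurable_snd)
        MeasurableSet.of_discrete
  have hE' : MeasurableSet {ω : (Fin n → Bool) → ℝ |
      ∃ π : Equiv.Perm (Fin n), accessible n (1 - (1 - α) * (1 - δ)) 1 ω π} := by
    have hrw : {ω : (Fin n → Bool) → ℝ |
        ∃ π : Equiv.Perm (Fin n), accessible n (1 - (1 - α) * (1 - δ)) 1 ω π}
        = ⋃ π : Equiv.Perm (Fin n), ⋂ t, ⋂ (_ : t < n),
            {ω : (Fin n → Bool) → ℝ |
              fitness n (1 - (1 - α) * (1 - δ)) 1 ω (pathVertex n π t)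
                < fitness n (1 - (1 - α) * (1 - δ)) 1 ω (pathVertex n π (t+1))} := by
      ext ω
      simp only [Set.mem_setOf_eq, Set.mem_iUnion, Set.mem_iInter, accessible]
    rw [hrw]
    exact MeasurableSet.iUnion fun π => MeasurableSet.iInter fun t =>
      MeasurableSet.iInter fun _ => measurableSet_lt (hfit _ 1 _) (hfit _ 1 _)
  -- measure preserving maps
  have MP1 : MeasurePreserving
      (MeasurableEquiv.arrowProdEquivProdArrow ℝ Bool (Fin n → Bool))
      (Measure.pi fun _ : Fin n → Bool => unif.prod bern)
      ((Measure.pi fun _ : Fin n → Bool => unif).prod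
        (Measure.pi fun _ : Fin n → Bool => bern)) :=
    measurePreserving_arrowProdEquivProdArrow ℝ Bool (Fin n → Bool)
      (fun _ => unif) (fun _ => bern)
  have MP2 : MeasurePreserving
      (fun (f : (Fin n → Bool) → ℝ × Bool) v => gG α δ (f v))
      (Measure.pi fun _ : Fin n → Bool => unif.prod bern)
      (Measure.pi fun _ : Fin n → Bool => unif) :=
    measurePreserving_pi _ _ (fun _ => mp_G α δ hα0 hα1 hδ0 hδ1 hq)
  -- the coordinates are a.e. bounded by 1
  have hnull : (Measure.pi fun _ : Fin n → Bool => unif.prod bern)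
      {f : (Fin n → Bool) → ℝ × Bool | ¬ ∀ v, (f v).1 ≤ 1} = 0 := by
    have hsub : {f : (Fin n → Bool) → ℝ × Bool | ¬ ∀ v, (f v).1 ≤ 1}
        ⊆ ⋃ v : Fin n → Bool, Function.eval v ⁻¹' {p : ℝ × Bool | 1 < p.1} := by
      intro f hf
      push_neg at hf
      obtain ⟨v, hv⟩ := hf
      exact Set.mem_iUnion.mpr ⟨v, hv⟩
    refine measure_mono_null hsub (measure_iUnion_null fun v => ?_)
    refine Measure.pi_eval_preimage_null _ ?_
    have h1 : {p : ℝ × Bool | 1 < p.1} = Ioi (1:ℝ) ×ˢ (Set.univ : Set Bool) := by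
      ext p; simp
    have h2 : unif (Ioi (1:ℝ)) = 0 := by
      rw [hunif, Measure.restrict_apply measurableSet_Ioi,
        show Ioi (1:ℝ) ∩ Icc 0 1 = ∅ from
          Set.eq_empty_iff_forall_notMem.mpr fun x hx => (not_le.mpr hx.1) hx.2.2,
        measure_empty]
    rw [h1, Measure.prod_prod, h2, zero_mul]
  have hgood : ∀ᵐ f ∂(Measure.pi fun _ : Fin n → Bool => unif.prod bern),
      ∀ v, (f v).1 ≤ 1 := by
    rw [MeasureTheory.ae_iff]; exact hnull
  -- a.e. equality of the two preimages
  have hae : ((MeasurableEquiv.arrowProdEquivProdArrow ℝ Bool (Fin n → Bool)) ⁻¹'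
        {p : ((Fin n → Bool) → ℝ) × ((Fin n → Bool) → Bool) |
          ∃ π : Equiv.Perm (Fin n), accessible n α 1 p.1 π ∧
            ∀ t ∈ Finset.Ioo 0 n, p.2 (pathVertex n π t) = true})
      =ᵐ[Measure.pi fun _ : Fin n → Bool => unif.prod bern]
      ((fun (f : (Fin n → Bool) → ℝ × Bool) v => gG α δ (f v)) ⁻¹'
        {ω : (Fin n → Bool) → ℝ |
          ∃ π : Equiv.Perm (Fin n), accessible n (1 - (1 - α) * (1 - δ)) 1 ω π}) := by
    rw [Filter.eventuallyEq_set]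
    filter_upwards [hgood] with f hf
    have hΨ : (MeasurableEquiv.arrowProdEquivProdArrow ℝ Bool (Fin n → Bool)) f
        = (fun v => (f v).1, fun v => (f v).2) := rfl
    simp only [Set.mem_preimage, hΨ, Set.mem_setOf_eq]
    exact core_equiv n hn α δ hα0 hα1 hδ0 hδ1 f hf
  exact (MP1.measure_preimage hE.nullMeasurableSet).symm.trans
    ((measure_congr hae).trans (MP2.measure_preimage hE'.nullMeasurableSet))
end
end
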